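/- arXiv:1902.10641 — 7 statements merged into one kernel-verified Lean document; each statement's English description precedes it below -/
import Mathlib

section
/- Let (C,T) be a minimal Cantor system that is locally radially shrinking. Then there exist a compact metric space Z, a continuous surjection F : Z → Z, and an isometric (or at least topological) embedding ι : C → Z with F ∘ ι = ι ∘ T, such that (Z,F) is locally radially shrinking, (Z,F) is not topologically transitive, and the set of periods of periodic points of F is unbounded (in particular F has infinitely many periodic points, with periods exceeding any given bound). -/
/-!
Fix `p ∈ C`. Since `C` is perfect and every orbit is dense, `p` comes back arbitrarily close to
itself, at arbitrarily late times `t + 1`, without ever coming back exactly. For each such return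
glue to `C` a periodic cycle of length `t + 1` shadowing `T p, …, T^[t + 1] p`, realized in
`C × ℝ` at heights that decrease along each cycle and from one cycle to the next, and tend to `0`.
The cycle points are isolated, so continuity and radial shrinking only need checking on `C`. There
the cycles follow `T`, except for the step closing a cycle, which jumps from `T^[t + 1] p ≈ p`
back to `T p`: near `p` this step is harmless because its target height lies below
`dist p (T^[t + 1] p)`, and near any other point it does not occur. Every orbit stays in `C` or in
one finite cycle, which are proper closed invariant sets, so the extension is not transitive.
-/

def IsLocallyRadiallyShrinking {X : Type*} [MetricSpace X] (T : X → X) : Prop :=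
  ∀ x : X, ∃ ε > 0, ∀ y : X, y ≠ x → dist x y < ε → dist (T x) (T y) < dist x y

open Function Set Filter Topology Metric

theorem Function.Semiconj.minimalPeriod_eq {α β : Type*} {f : α → α} {g : β → β} {φ : α → β}
    (hφ : Injective φ) (h : Semiconj φ f g) (x : α) :
    minimalPeriod g (φ x) = minimalPeriod f x :=
  minimalPeriod_eq_minimalPeriod_iff.2 fun n => by
    rw [IsPeriodicPt, IsPeriodicPt, IsFixedPt, IsFixedPt, ← (h.iterate_right n).eq x, hφ.eq_iff]

theorem minimalPeriod_finRotate {n : ℕ} (i : Fin (n + 1)) :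
    minimalPeriod (finRotate (n + 1)) i = n + 1 := by
  have hiter : ∀ k (hk : k < n + 1), (finRotate (n + 1))^[k] i = i + ⟨k, hk⟩ := fun k hk => by
    rw [← finCycle_eq_finRotate_iterate (k := ⟨k, hk⟩), finCycle_apply]
  have hper : IsPeriodicPt (finRotate (n + 1)) (n + 1) i := by
    rw [IsPeriodicPt, IsFixedPt, iterate_succ_apply', hiter n n.lt_succ_self, finRotate_apply,
      add_assoc, ← Fin.last, Fin.last_add_one, add_zero]
  refine le_antisymm (hper.minimalPeriod_le n.succ_pos) (not_lt.1 fun hlt => ?_)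
  have hret := iterate_minimalPeriod (f := finRotate (n + 1)) (x := i)
  rw [hiter _ hlt, add_eq_left] at hret
  exact (hper.minimalPeriod_pos n.succ_pos).ne' (congrArg Fin.val hret)

theorem not_dense_orbit_of_mapsTo {X : Type*} [TopologicalSpace X] {f : X → X} {s : Set X}
    (hs : IsClosed s) (hs_ne : s ≠ univ) (hf : MapsTo f s s) {x : X} (hx : x ∈ s) :
    ¬ Dense (range fun n => f^[n] x) := fun hd =>
  hs_ne <| univ_subset_iff.1 <| hd.closure_eq ▸
    hs.closure_subset_iff.2 (range_subset_iff.2 fun n => hf.iterate n hx)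

theorem surjective_of_dense_orbit_apply {X : Type*} [TopologicalSpace X] [CompactSpace X]
    [T2Space X] {T : X → X} (hT : Continuous T) {x : X}
    (hx : Dense (range fun n => T^[n] (T x))) : Surjective T := by
  have hd : Dense (range T) :=
    hx.mono (range_subset_iff.2 fun n => ⟨T^[n] x, (iterate_succ_apply' T n x).symm.trans
      (iterate_succ_apply T n x)⟩)
  exact range_eq_univ.1 ((isCompact_range hT).isClosed.closure_eq ▸ hd.closure_eq)

theorem isClosed_range_of_finite_setOf_le_abs_snd {X Z : Type*} [TopologicalSpace X] [T1Space X]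
    (f : Z → X × ℝ) (h0 : ∀ x, (x, 0) ∈ range f) (hf : ∀ δ > 0, {z | δ ≤ |(f z).2|}.Finite) :
    IsClosed (range f) := by
  refine isOpen_compl_iff.1 (isOpen_iff_mem_nhds.2 fun q hq => ?_)
  have hq0 : q.2 ≠ 0 := fun h => hq (by simpa [← h] using h0 q.1)
  have hδ : 0 < |q.2| / 2 := by positivity
  have hfin := (hf _ hδ).image f
  refine mem_of_superset (((isOpen_lt (continuous_const (y := |q.2| / 2)) continuous_snd.abs).sdiff
    hfin.isClosed).mem_nhds ⟨?_, ?_⟩) ?_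
  · show |q.2| / 2 < |q.2|
    linarith [abs_pos.2 hq0]
  · rintro ⟨z, -, rfl⟩
    exact hq ⟨z, rfl⟩
  · rintro _ ⟨hlt, hS⟩ ⟨z, rfl⟩
    exact hS ⟨z, le_of_lt (show |q.2| / 2 < |(f z).2| from hlt), rfl⟩

section LevelHeight

variable {s : ℕ → ℝ} {n m k j : ℕ}

noncomputable def levelHeight (s : ℕ → ℝ) (n k : ℕ) : ℝ := s n * (1 + ((k : ℝ) + 2)⁻¹)

theorem lt_levelHeight (hs : 0 < s n) : s n < levelHeight s n k := by
  have : 0 < ((k : ℝ) + 2)⁻¹ := by positivity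
  unfold levelHeight
  nlinarith

theorem levelHeight_lt (hs : 0 < s n) : levelHeight s n k < 2 * s n := by
  have : ((k : ℝ) + 2)⁻¹ < 1 := inv_lt_one_of_one_lt₀ (by linarith [k.cast_nonneg (α := ℝ)])
  unfold levelHeight
  nlinarith

theorem strictAnti_levelHeight (hs : 0 < s n) : StrictAnti (levelHeight s n) := fun k j hkj => by
  have : ((j : ℝ) + 2)⁻¹ < ((k : ℝ) + 2)⁻¹ := by gcongr
  unfold levelHeight
  gcongr

theorem levelHeight_lt_of_lt (hs : ∀ n, 0 < s n) (hs2 : ∀ n, 2 * s (n + 1) ≤ s n) (hnm : n < m) :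
    levelHeight s m j < levelHeight s n k :=
  calc levelHeight s m j < 2 * s m := levelHeight_lt (hs m)
    _ ≤ 2 * s (n + 1) := by
      gcongr
      exact antitone_nat_of_succ_le (fun i => by linarith [hs2 i, hs (i + 1)]) hnm
    _ ≤ s n := hs2 n
    _ < levelHeight s n k := lt_levelHeight (hs n)

theorem injective2_levelHeight (hs : ∀ n, 0 < s n) (hs2 : ∀ n, 2 * s (n + 1) ≤ s n) :
    Injective2 (levelHeight s) := by
  intro n m k j h
  rcases lt_trichotomy n m with hnm | rfl | hnm
  · exact absurd h (levelHeight_lt_of_lt hs hs2 hnm).ne'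
  · exact ⟨rfl, (strictAnti_levelHeight (hs n)).injective h⟩
  · exact absurd h (levelHeight_lt_of_lt hs hs2 hnm).ne

end LevelHeight

structure ReturnSequence {C : Type*} [TopologicalSpace C] (T : C → C) where
  point : C
  time : ℕ → ℕ
  le_time : ∀ n, n ≤ time n
  iterate_ne : ∀ n, T^[time n + 1] point ≠ point
  tendsto_iterate : Tendsto (fun n => T^[time n + 1] point) atTop (𝓝 point)

theorem exists_returnSequence {C : Type*} [MetricSpace C] {T : C → C} {p : C}
    (hp : AccPt p (𝓟 univ)) (hmin : ∀ x : C, Dense (range fun n => T^[n] x)) :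
    Nonempty (ReturnSequence T) := by
  have hret : ∀ n : ℕ, ∃ k, T^[k + n + 1] p ∈ ball p (1 / (n + 1)) \ {p} := by
    intro n
    obtain ⟨y, ⟨hy, -⟩, hyp⟩ := accPt_iff_nhds.1 hp _ (ball_mem_nhds p Nat.one_div_pos_of_nat)
    obtain ⟨_, ⟨k, rfl⟩, hk⟩ := (hmin (T^[n + 1] p)).exists_mem_open
      (isOpen_ball.sdiff isClosed_singleton) ⟨y, hy, hyp⟩
    exact ⟨k, by rwa [add_assoc, iterate_add_apply]⟩
  choose k hk using hret
  refine ⟨⟨p, fun n => k n + n, fun n => Nat.le_add_left n (k n), fun n => (hk n).2, ?_⟩⟩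
  exact tendsto_iff_dist_tendsto_zero.2 (squeeze_zero (fun _ => dist_nonneg)
    (fun n => (mem_ball.1 (hk n).1).le) tendsto_one_div_add_atTop_nhds_zero_nat)

namespace ReturnSequence

variable {C : Type*} [MetricSpace C] {T : C → C} (R : ReturnSequence T)

noncomputable def returnDist (n : ℕ) : ℝ := dist (T^[R.time n + 1] R.point) R.point

theorem returnDist_pos (n : ℕ) : 0 < R.returnDist n := dist_pos.2 (R.iterate_ne n)

theorem tendsto_returnDist : Tendsto R.returnDist atTop (𝓝 0) :=
  tendsto_iff_dist_tendsto_zero.1 R.tendsto_iterate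

/-- The heights of the `n`-th cycle lie in `(scale n, 2 * scale n)`: halving the scale from one
cycle to the next keeps cycles apart, and `2 * scale n ≤ returnDist n` keeps the step closing the
`n`-th cycle shrinking near `R.point`. -/
noncomputable def scale : ℕ → ℝ
  | 0 => R.returnDist 0 / 2
  | n + 1 => min (scale n) (R.returnDist (n + 1)) / 2

theorem scale_pos : ∀ n, 0 < R.scale n
  | 0 => half_pos (R.returnDist_pos 0)
  | n + 1 => half_pos (lt_min (scale_pos n) (R.returnDist_pos (n + 1)))

theorem two_mul_scale_succ_le (n : ℕ) : 2 * R.scale (n + 1) ≤ R.scale n := by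
  rw [scale]; linarith [min_le_left (R.scale n) (R.returnDist (n + 1))]

theorem two_mul_scale_le : ∀ n, 2 * R.scale n ≤ R.returnDist n
  | 0 => by rw [scale]; linarith
  | n + 1 => by rw [scale]; linarith [min_le_right (R.scale n) (R.returnDist (n + 1))]

theorem antitone_scale : Antitone R.scale :=
  antitone_nat_of_succ_le fun n => by linarith [R.two_mul_scale_succ_le n, R.scale_pos (n + 1)]

theorem tendsto_scale : Tendsto R.scale atTop (𝓝 0) :=
  squeeze_zero (fun n => (R.scale_pos n).le)
    (fun n => by linarith [R.two_mul_scale_le n, R.scale_pos n]) R.tendsto_returnDist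

abbrev Index := Σ n, Fin (R.time n + 1)

noncomputable def height (i : R.Index) : ℝ := levelHeight R.scale i.1 i.2

theorem height_pos (i : R.Index) : 0 < R.height i :=
  (R.scale_pos i.1).trans (lt_levelHeight (R.scale_pos i.1))

theorem height_lt (i : R.Index) : R.height i < 2 * R.scale i.1 :=
  levelHeight_lt (R.scale_pos i.1)

theorem height_finRotate_lt {n : ℕ} {k : Fin (R.time n + 1)} (hk : k ≠ Fin.last _) :
    R.height ⟨n, finRotate _ k⟩ < R.height ⟨n, k⟩ := by
  apply strictAnti_levelHeight (R.scale_pos n)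
  rw [coe_finRotate_of_ne_last hk]
  exact Nat.lt_succ_self _

theorem height_zero_lt_returnDist (n : ℕ) : R.height ⟨n, 0⟩ < R.returnDist n :=
  (R.height_lt _).trans_le (R.two_mul_scale_le n)

theorem height_injective : Injective R.height := by
  rintro ⟨n, k⟩ ⟨m, j⟩ h
  obtain ⟨rfl, hkj⟩ : n = m ∧ (k : ℕ) = j :=
    injective2_levelHeight R.scale_pos R.two_mul_scale_succ_le h
  rw [Fin.ext hkj]

theorem finite_setOf_le_height {δ : ℝ} (hδ : 0 < δ) : {i : R.Index | δ ≤ R.height i}.Finite := by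
  have hlevels : {n | ¬ R.scale n < δ / 2}.Finite := eventually_cofinite.1 <|
    Nat.cofinite_eq_atTop ▸ R.tendsto_scale.eventually (gt_mem_nhds (half_pos hδ))
  refine (hlevels.preimage' (f := Sigma.fst) fun n _ =>
    (finite_range (Sigma.mk n)).subset ?_).subset ?_
  · rintro ⟨m, k⟩ rfl
    exact ⟨k, rfl⟩
  · intro i (hi : δ ≤ R.height i)
    exact not_lt.2 (by linarith [R.height_lt i])

inductive Extension
  | base : C → Extension
  | cycle : R.Index → Extension

open Extension

noncomputable def embed : R.Extension → C × ℝ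
  | base x => (x, 0)
  | cycle i => (T^[i.2 + 1] R.point, R.height i)

theorem embed_injective : Injective R.embed := by
  rintro (x | i) (y | j) h
  · exact congrArg base (congrArg Prod.fst h)
  · exact absurd (congrArg Prod.snd h) (R.height_pos j).ne
  · exact absurd (congrArg Prod.snd h) (R.height_pos i).ne'
  · exact congrArg cycle (R.height_injective (congrArg Prod.snd h))

noncomputable instance : MetricSpace R.Extension :=
  MetricSpace.induced R.embed R.embed_injective inferInstance

theorem isometry_embed : Isometry R.embed := Isometry.of_dist_eq fun _ _ => rfl

theorem dist_base_base (x y : C) : dist (base x : R.Extension) (base y) = dist x y := by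
  change dist (R.embed _) (R.embed _) = _
  simp [embed, Prod.dist_eq]

theorem isometry_base : Isometry (base : C → R.Extension) :=
  Isometry.of_dist_eq R.dist_base_base

theorem dist_base_cycle (x : C) (i : R.Index) :
    dist (base x : R.Extension) (cycle i) = max (dist x (T^[i.2 + 1] R.point)) (R.height i) := by
  change dist (R.embed _) (R.embed _) = _
  simp [embed, Prod.dist_eq, abs_of_pos (R.height_pos i)]

theorem dist_le_dist_base_cycle (x : C) (i : R.Index) :
    dist x (T^[i.2 + 1] R.point) ≤ dist (base x : R.Extension) (cycle i) :=
  (R.dist_base_cycle x i).symm ▸ le_max_left _ _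

theorem finite_setOf_le_abs_embed_snd {δ : ℝ} (hδ : 0 < δ) :
    {z : R.Extension | δ ≤ |(R.embed z).2|}.Finite := by
  refine ((R.finite_setOf_le_height hδ).image cycle).subset ?_
  rintro (x | i) (hz : δ ≤ |(R.embed _).2|)
  · simp [embed] at hz
    linarith
  · exact ⟨i, by simpa [embed, abs_of_pos (R.height_pos i)] using hz, rfl⟩

instance [CompactSpace C] : CompactSpace R.Extension := by
  have hclosed : IsClosed (range R.embed) :=
    isClosed_range_of_finite_setOf_le_abs_snd _ (fun x => ⟨base x, rfl⟩)
      fun _ => R.finite_setOf_le_abs_embed_snd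
  have hsub : range R.embed ⊆ univ ×ˢ Icc 0 (2 * R.scale 0) := by
    rintro _ ⟨x | i, rfl⟩
    · exact ⟨mem_univ _, le_rfl, show (0 : ℝ) ≤ _ by linarith [R.scale_pos 0]⟩
    · refine ⟨mem_univ _, (R.height_pos i).le, show R.height i ≤ _ from ?_⟩
      linarith [R.height_lt i, R.antitone_scale (Nat.zero_le i.1)]
  rw [← isCompact_univ_iff, R.isometry_embed.isEmbedding.isCompact_iff, image_univ]
  exact (isCompact_univ.prod isCompact_Icc).of_isClosed_subset hclosed hsub

theorem isOpen_singleton_cycle (i : R.Index) : IsOpen {(cycle i : R.Extension)} := by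
  have hi := R.height_pos i
  refine isOpen_singleton_of_finite_mem_nhds _
    ((isOpen_lt continuous_const (continuous_snd.comp R.isometry_embed.continuous).abs).mem_nhds
      (x := cycle i) (show R.height i / 2 < |R.height i| by rw [abs_of_pos hi]; linarith))
    ((R.finite_setOf_le_abs_embed_snd (half_pos hi)).subset
      fun z (h : _ < |(R.embed z).2|) => h.le)

def map : R.Extension → R.Extension
  | base x => base (T x)
  | cycle ⟨n, k⟩ => cycle ⟨n, finRotate _ k⟩

@[simp] theorem map_base (x : C) : R.map (base x) = base (T x) := rfl

@[simp] theorem map_cycle (n : ℕ) (k : Fin (R.time n + 1)) :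
    R.map (cycle ⟨n, k⟩) = cycle ⟨n, finRotate _ k⟩ := rfl

theorem surjective_map (hT : Surjective T) : Surjective R.map := by
  rintro (x | ⟨n, k⟩)
  · obtain ⟨y, rfl⟩ := hT x
    exact ⟨base y, rfl⟩
  · exact ⟨cycle ⟨n, (finRotate _).symm k⟩, by simp [map]⟩

theorem minimalPeriod_map_cycle (n : ℕ) (k : Fin (R.time n + 1)) :
    minimalPeriod R.map (cycle ⟨n, k⟩) = R.time n + 1 := by
  have hsemi : Semiconj (fun k => (cycle ⟨n, k⟩ : R.Extension)) (finRotate _) R.map :=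
    fun _ => rfl
  rw [hsemi.minimalPeriod_eq (fun _ _ h => eq_of_heq (Sigma.mk.inj (cycle.inj h)).2) k,
    minimalPeriod_finRotate]

theorem not_dense_orbit_map [CompleteSpace C] (z : R.Extension) :
    ¬ Dense (range fun n => R.map^[n] z) := by
  rcases z with x | ⟨n, k⟩
  · refine not_dense_orbit_of_mapsTo R.isometry_base.isClosedEmbedding.isClosed_range ?_
      (by rintro _ ⟨y, rfl⟩; exact ⟨T y, rfl⟩) (mem_range_self x)
    intro h
    obtain ⟨y, hy⟩ := h.symm ▸ mem_univ (cycle ⟨0, 0⟩ : R.Extension)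
    nomatch hy
  · refine not_dense_orbit_of_mapsTo (finite_range fun j => (cycle ⟨n, j⟩ : R.Extension)).isClosed
      ?_ (by rintro _ ⟨j, rfl⟩; exact ⟨finRotate _ j, rfl⟩) ⟨k, rfl⟩
    intro h
    obtain ⟨j, hj⟩ := h.symm ▸ mem_univ (base R.point : R.Extension)
    nomatch hj

theorem tendsto_cycle_last :
    Tendsto (fun n => (cycle ⟨n, Fin.last _⟩ : R.Extension)) atTop (𝓝 (base R.point)) := by
  rw [R.isometry_embed.isEmbedding.tendsto_nhds_iff]
  refine R.tendsto_iterate.prodMk_nhds (squeeze_zero (fun n => (R.height_pos _).le)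
    (fun n => (R.height_lt _).le) ?_)
  simpa using R.tendsto_scale.const_mul 2

/-- The last points of the cycles, the only ones not moved along the orbit of `T`, accumulate only
at `R.point`. -/
theorem eventually_ne_last_or_eq_point (x : C) :
    ∀ᶠ z in 𝓝 (base x : R.Extension), ∀ n (k : Fin (R.time n + 1)),
      z = cycle ⟨n, k⟩ → k ≠ Fin.last _ ∨ x = R.point := by
  by_cases hx : x = R.point
  · exact Eventually.of_forall fun _ _ _ _ => Or.inr hx
  have hnot : base x ∉ insert (base R.point)
      (range fun n => (cycle ⟨n, Fin.last _⟩ : R.Extension)) := by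
    rintro (h | ⟨n, h⟩)
    · exact hx (base.inj h)
    · nomatch h
  filter_upwards [R.tendsto_cycle_last.isCompact_insert_range.isClosed.compl_mem_nhds hnot]
    with z hz n k rfl
  exact Or.inl fun hk => hz (mem_insert_of_mem _ ⟨n, by rw [hk]⟩)

/-- Used with `b = ε` for continuity and with `b = dist (base x) (cycle ⟨n, k⟩)` for radial
shrinking. -/
theorem dist_map_base_map_cycle_lt {x : C} {n : ℕ} {k : Fin (R.time n + 1)} {b : ℝ}
    (hk : k ≠ Fin.last _ ∨ x = R.point) (hT : dist (T x) (T (T^[k + 1] R.point)) < b)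
    (hb : dist (base x : R.Extension) (cycle ⟨n, k⟩) ≤ b) :
    dist (R.map (base x)) (R.map (cycle ⟨n, k⟩)) < b := by
  rw [dist_base_cycle] at hb
  rw [map_base, map_cycle, dist_base_cycle]
  by_cases hlast : k = Fin.last _
  · obtain rfl := hk.resolve_left (not_not.2 hlast)
    subst hlast
    rw [finRotate_last]
    refine max_lt ?_ ((R.height_zero_lt_returnDist n).trans_le ?_)
    · simpa using dist_nonneg.trans_lt hT
    · rw [returnDist, dist_comm]
      exact (le_max_left _ _).trans hb
  · refine max_lt ?_ ((R.height_finRotate_lt hlast).trans_le ((le_max_right _ _).trans hb))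
    rwa [coe_finRotate_of_ne_last hlast, iterate_succ_apply']

theorem continuous_map (hT : Continuous T) : Continuous R.map := by
  refine continuous_iff_continuousAt.2 fun z => ?_
  rcases z with x | i
  · refine Metric.continuousAt_iff.2 fun ε hε => ?_
    obtain ⟨δ₀, hδ₀, hgood⟩ := Metric.eventually_nhds_iff.1 (R.eventually_ne_last_or_eq_point x)
    obtain ⟨δ₁, hδ₁, hTx⟩ := Metric.continuousAt_iff.1 hT.continuousAt ε hε
    refine ⟨min (min δ₀ δ₁) ε, by positivity, fun z hz => ?_⟩
    rcases z with y | ⟨n, k⟩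
    · rw [map_base, map_base, dist_base_base] at *
      exact hTx (hz.trans_le ((min_le_left _ _).trans (min_le_right _ _)))
    · rw [dist_comm] at hz ⊢
      refine R.dist_map_base_map_cycle_lt (hgood ?_ n k rfl) ?_ (hz.le.trans (min_le_right _ _))
      · rw [dist_comm]
        exact hz.trans_le ((min_le_left _ _).trans (min_le_left _ _))
      · rw [dist_comm]
        refine hTx ((dist_comm x _ ▸ R.dist_le_dist_base_cycle x ⟨n, k⟩).trans_lt ?_)
        exact hz.trans_le ((min_le_left _ _).trans (min_le_right _ _))
  · rw [ContinuousAt, (isOpen_singleton_iff_nhds_eq_pure _).1 (R.isOpen_singleton_cycle i)]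
    exact tendsto_pure_nhds _ _

theorem isLocallyRadiallyShrinking_map (hT : IsLocallyRadiallyShrinking T) :
    IsLocallyRadiallyShrinking R.map := by
  rintro (x | i)
  · obtain ⟨δ₀, hδ₀, hgood⟩ := Metric.eventually_nhds_iff.1 (R.eventually_ne_last_or_eq_point x)
    obtain ⟨ε, hε, hshrink⟩ := hT x
    refine ⟨min δ₀ ε, lt_min hδ₀ hε, ?_⟩
    rintro (y | ⟨n, k⟩) hne hd
    · rw [map_base, map_base, dist_base_base, dist_base_base] at *
      exact hshrink y (fun h => hne (h ▸ rfl)) (hd.trans_le (min_le_right _ _))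
    · refine R.dist_map_base_map_cycle_lt (hgood ?_ n k rfl) ?_ le_rfl
      · rw [dist_comm]
        exact hd.trans_le (min_le_left _ _)
      have hle := R.dist_le_dist_base_cycle x ⟨n, k⟩
      by_cases hy : T^[k + 1] R.point = x
      · rw [hy, dist_self]
        exact dist_pos.2 fun h => nomatch h
      · exact (hshrink _ hy (hle.trans_lt (hd.trans_le (min_le_right _ _)))).trans_le hle
  · obtain ⟨ε, hε, h⟩ := Metric.isOpen_singleton_iff.1 (R.isOpen_singleton_cycle i)
    exact ⟨ε, hε, fun y hy hd => absurd (h y (by rwa [dist_comm])) hy⟩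

end ReturnSequence

theorem minimal_Cantor_lrs_extends_to_unbounded_periods_general
    {C : Type u} [MetricSpace C] [CompactSpace C] [Nonempty C]
    (hperf : Perfect (Set.univ : Set C))
    (T : C → C) (hT : Continuous T)
    (hmin : ∀ x : C, Dense (Set.range fun n : ℕ => T^[n] x))
    (hlrs : IsLocallyRadiallyShrinking T) :
    ∃ (Z : Type u) (_ : MetricSpace Z), CompactSpace Z ∧
      ∃ F : Z → Z, Continuous F ∧ Function.Surjective F ∧
        (∃ ι : C → Z, Topology.IsEmbedding ι ∧ ∀ c : C, F (ι c) = ι (T c)) ∧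
        IsLocallyRadiallyShrinking F ∧
        ¬ (∃ z : Z, Dense (Set.range fun n : ℕ => F^[n] z)) ∧
        (∀ N : ℕ, ∃ p : Z, p ∈ Function.periodicPts F ∧
          N < Function.minimalPeriod F p) := by
  obtain ⟨p⟩ := ‹Nonempty C›
  obtain ⟨R⟩ := exists_returnSequence (hperf.acc p (mem_univ p)) hmin
  refine ⟨R.Extension, inferInstance, inferInstance, R.map, R.continuous_map hT,
    R.surjective_map (surjective_of_dense_orbit_apply hT (hmin (T p))),
    ⟨.base, R.isometry_base.isEmbedding, fun _ => rfl⟩, R.isLocallyRadiallyShrinking_map hlrs,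
    fun ⟨z, hz⟩ => R.not_dense_orbit_map z hz, fun N => ⟨.cycle ⟨N, 0⟩, ?_, ?_⟩⟩
  · rw [← minimalPeriod_pos_iff_mem_periodicPts, R.minimalPeriod_map_cycle]
    exact Nat.succ_pos _
  · rw [R.minimalPeriod_map_cycle]
    exact Nat.lt_succ_of_le (R.le_time N)

/-- Every minimal Cantor l.r.s. system `(C, T)` extends to a non-transitive l.r.s.
system `(Z, F)` on a compact metric space, via a topological embedding `ι : C → Z`
with `F ∘ ι = ι ∘ T`, such that the set of (least) periods of periodic points of `F`
is unbounded. -/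
theorem minimal_Cantor_lrs_extends_to_unbounded_periods
    {C : Type u} [MetricSpace C] [CompactSpace C] [Nonempty C]
    [TotallyDisconnectedSpace C] (hperf : Perfect (Set.univ : Set C))
    (T : C → C) (hT : Continuous T)
    (hmin : ∀ x : C, Dense (Set.range fun n : ℕ => T^[n] x))
    (hlrs : IsLocallyRadiallyShrinking T) :
    ∃ (Z : Type u) (_ : MetricSpace Z), CompactSpace Z ∧
      ∃ F : Z → Z, Continuous F ∧ Function.Surjective F ∧
        (∃ ι : C → Z, Topology.IsEmbedding ι ∧ ∀ c : C, F (ι c) = ι (T c)) ∧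
        IsLocallyRadiallyShrinking F ∧
        ¬ (∃ z : Z, Dense (Set.range fun n : ℕ => F^[n] z)) ∧
        (∀ N : ℕ, ∃ p : Z, p ∈ Function.periodicPts F ∧
          N < Function.minimalPeriod F p) :=
  minimal_Cantor_lrs_extends_to_unbounded_periods_general hperf T hT hmin hlrs
end

section
/- Suppose (X,T) is a locally radially shrinking system and x ∈ X is not a periodic point. Then the generalized α-limit set α(x) = ⋂ₙ closure({y ∈ X : Tⁱ(y) = x for some i ≥ n}) contains no periodic point of T. In particular, α(x) contains an infinite minimal subsystem (a nonempty closed T-invariant subset that is minimal for T and is infinite). -/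
/-- The generalized α-limit set of `x`:
`α(x) = ⋂ₙ closure {y : Tⁱ(y) = x for some i ≥ n}`. -/
def genAlphaLimit {X : Type*} [MetricSpace X] (T : X → X) (x : X) : Set X :=
  ⋂ n : ℕ, closure {y : X | ∃ i : ℕ, n ≤ i ∧ T^[i] y = x}

/-! Near a point `p` of period `k`, a locally radially shrinking map does not increase the
distance to `p` over whole periods. So a preimage `y` of `x` close to `p`, say `T^i y = x`, can be
pushed forward by `k * (i / k)` steps to a point still close to `p` that reaches `x` in `i % k < k`
steps. The points reaching `x` in fewer than `k` steps form a closed set, which therefore contains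
`p`; then `x = T^r p` is periodic. For the second part, Zorn's lemma and compactness give a minimal
subsystem of the nonempty closed invariant set `α(x)`, and it is infinite because a finite
invariant set contains a periodic point. -/

open Function Set

namespace IsLocallyRadiallyShrinking

variable {X : Type*} [MetricSpace X] {T : X → X}

theorem exists_dist_map_le (hT : IsLocallyRadiallyShrinking T) (x : X) :
    ∃ ε > 0, ∀ y, dist x y < ε → dist (T x) (T y) ≤ dist x y := by
  obtain ⟨ε, hε, hshrink⟩ := hT x
  refine ⟨ε, hε, fun y hy => ?_⟩
  rcases eq_or_ne y x with rfl | hyx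
  · simp
  · exact (hshrink y hyx hy).le

theorem exists_dist_iterate_le (hT : IsLocallyRadiallyShrinking T) (x : X) (n : ℕ) :
    ∃ ε > 0, ∀ y, dist x y < ε → dist (T^[n] x) (T^[n] y) ≤ dist x y := by
  induction n with
  | zero => exact ⟨1, one_pos, fun y _ => by simp⟩
  | succ n ih =>
    obtain ⟨ε₁, hε₁, hle₁⟩ := ih
    obtain ⟨ε₂, hε₂, hle₂⟩ := hT.exists_dist_map_le (T^[n] x)
    refine ⟨min ε₁ ε₂, lt_min hε₁ hε₂, fun y hy => ?_⟩
    have hn := hle₁ y (hy.trans_le (min_le_left _ _))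
    rw [iterate_succ_apply', iterate_succ_apply']
    exact (hle₂ _ (hn.trans_lt (hy.trans_le (min_le_right _ _)))).trans hn

theorem exists_dist_iterate_mul_le {p : X} {k : ℕ} (hT : IsLocallyRadiallyShrinking T)
    (hp : IsPeriodicPt T k p) :
    ∃ ε > 0, ∀ y, dist p y < ε → ∀ m, dist p (T^[k * m] y) ≤ dist p y := by
  obtain ⟨ε, hε, hle⟩ := hT.exists_dist_iterate_le p k
  refine ⟨ε, hε, fun y hy m => ?_⟩
  induction m with
  | zero => simp
  | succ m ih =>
    calc dist p (T^[k * (m + 1)] y) = dist (T^[k] p) (T^[k] (T^[k * m] y)) := by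
          rw [hp.eq, ← iterate_add_apply, Nat.mul_succ, add_comm]
      _ ≤ dist p (T^[k * m] y) := hle _ (ih.trans_lt hy)
      _ ≤ dist p y := ih

theorem exists_iterate_eq_of_mem_closure {p x : X} {k : ℕ} (hT : IsLocallyRadiallyShrinking T)
    (hcont : Continuous T) (hk : 0 < k) (hp : IsPeriodicPt T k p)
    (hpx : p ∈ closure {y | ∃ i, T^[i] y = x}) :
    ∃ r < k, T^[r] p = x := by
  obtain ⟨ε, hε, hle⟩ := hT.exists_dist_iterate_mul_le hp
  have hclosed : IsClosed (⋃ r ∈ Iio k, T^[r] ⁻¹' {x}) :=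
    (finite_Iio k).isClosed_biUnion fun r _ => isClosed_singleton.preimage (hcont.iterate r)
  suffices p ∈ closure (⋃ r ∈ Iio k, T^[r] ⁻¹' {x}) by
    simpa using hclosed.closure_subset this
  refine Metric.mem_closure_iff.2 fun δ hδ => ?_
  obtain ⟨y, ⟨i, hi⟩, hy⟩ := Metric.mem_closure_iff.1 hpx _ (lt_min hδ hε)
  refine ⟨T^[k * (i / k)] y, mem_biUnion (Nat.mod_lt i hk) ?_, ?_⟩
  · rw [mem_preimage, ← iterate_add_apply, Nat.mod_add_div, hi, mem_singleton_iff]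
  · exact (hle y (hy.trans_le (min_le_right _ _)) _).trans_lt (hy.trans_le (min_le_left _ _))

theorem isPeriodicPt_of_mem_closure {p x : X} {k : ℕ} (hT : IsLocallyRadiallyShrinking T)
    (hcont : Continuous T) (hk : 0 < k) (hp : IsPeriodicPt T k p)
    (hpx : p ∈ closure {y | ∃ i, T^[i] y = x}) :
    IsPeriodicPt T k x := by
  obtain ⟨r, -, rfl⟩ := hT.exists_iterate_eq_of_mem_closure hcont hk hp hpx
  exact hp.apply_iterate r

end IsLocallyRadiallyShrinking

section genAlphaLimit

variable {X : Type*} [MetricSpace X] {T : X → X} {x : X}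

theorem genAlphaLimit_subset_closure :
    genAlphaLimit T x ⊆ closure {y | ∃ i, T^[i] y = x} :=
  (iInter_subset _ 0).trans <| closure_mono fun _ ⟨i, _, hi⟩ => ⟨i, hi⟩

theorem isClosed_genAlphaLimit : IsClosed (genAlphaLimit T x) :=
  isClosed_iInter fun _ => isClosed_closure

theorem genAlphaLimit_nonempty [CompactSpace X] (hsurj : Surjective T) :
    (genAlphaLimit T x).Nonempty := by
  refine IsCompact.nonempty_iInter_of_sequence_nonempty_isCompact_isClosed _
    (fun n => closure_mono fun y ⟨i, hi, hy⟩ => ⟨i, n.le_succ.trans hi, hy⟩)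
    (fun n => ?_) isClosed_closure.isCompact fun _ => isClosed_closure
  obtain ⟨y, hy⟩ := hsurj.iterate n x
  exact ⟨y, subset_closure ⟨n, le_rfl, hy⟩⟩

theorem mapsTo_genAlphaLimit (hcont : Continuous T) :
    MapsTo T (genAlphaLimit T x) (genAlphaLimit T x) := by
  refine fun p hp => mem_iInter.2 fun n => ?_
  have hstep :
      MapsTo T {y | ∃ i, n + 1 ≤ i ∧ T^[i] y = x} {y | ∃ i, n ≤ i ∧ T^[i] y = x} :=
    fun y ⟨i, hi, hy⟩ => by
      obtain ⟨j, rfl⟩ : ∃ j, i = j + 1 := ⟨i - 1, by omega⟩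
      exact ⟨j, by omega, by rwa [iterate_succ_apply] at hy⟩
  exact hstep.closure hcont (mem_iInter.1 hp (n + 1))

end genAlphaLimit

theorem Set.Finite.exists_mem_periodicPts {α : Type*} {f : α → α} {s : Set α} (hs : s.Finite)
    (hne : s.Nonempty) (hf : MapsTo f s s) : ∃ p ∈ s, p ∈ periodicPts f := by
  obtain ⟨x, hx⟩ := hne
  obtain ⟨m, n, hmn, heq⟩ := hs.exists_lt_map_eq_of_forall_mem fun n => hf.iterate n hx
  refine ⟨f^[m] x, hf.iterate m hx, mk_mem_periodicPts (Nat.sub_pos_of_lt hmn) ?_⟩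
  rw [IsPeriodicPt, IsFixedPt, ← iterate_add_apply, Nat.sub_add_cancel hmn.le, heq]

theorem exists_minimal_isClosed_mapsTo {X : Type*} [TopologicalSpace X] [CompactSpace X]
    {T : X → X} {K : Set X} (hne : K.Nonempty) (hK : IsClosed K) (hKT : MapsTo T K K) :
    ∃ M ⊆ K, Minimal (fun M => M.Nonempty ∧ IsClosed M ∧ MapsTo T M M) M := by
  refine zorn_superset_nonempty _ (fun c hc hchain hcne => ?_) K ⟨hne, hK, hKT⟩
  have : Nonempty c := hcne.to_subtype
  refine ⟨⋂₀ c, ⟨?_, isClosed_sInter fun M hM => (hc hM).2.1, ?_⟩,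
    fun _ => sInter_subset_of_mem⟩
  · exact IsCompact.nonempty_sInter_of_directed_nonempty_isCompact_isClosed
      (hchain.symm.directedOn (r := (· ⊇ · : Set X → Set X → Prop))) (fun M hM => (hc hM).1)
      (fun M hM => (hc hM).2.1.isCompact) fun M hM => (hc hM).2.1
  · exact mapsTo_sInter.2 fun M hM => (hc hM).2.2.mono_left (sInter_subset_of_mem hM)

theorem genAlphaLimit_no_periodic_points_of_lrs_general
    {X : Type*} [MetricSpace X] [CompactSpace X]
    (T : X → X) (hT : Continuous T) (hsurj : Function.Surjective T)
    (hlrs : IsLocallyRadiallyShrinking T)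
    (x : X) (hx : ∀ k : ℕ, 1 ≤ k → T^[k] x ≠ x) :
    (∀ p ∈ genAlphaLimit T x, ∀ k : ℕ, 1 ≤ k → T^[k] p ≠ p) ∧
    ∃ M : Set X, M ⊆ genAlphaLimit T x ∧ M.Nonempty ∧ IsClosed M ∧
      Set.MapsTo T M M ∧ M.Infinite ∧
      (∀ M' : Set X, M' ⊆ M → M'.Nonempty → IsClosed M' → Set.MapsTo T M' M' →
        M' = M) := by
  have hnoper : ∀ p ∈ genAlphaLimit T x, ∀ k : ℕ, 1 ≤ k → T^[k] p ≠ p :=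
    fun p hp k hk hpk =>
      hx k hk (hlrs.isPeriodicPt_of_mem_closure hT hk hpk (genAlphaLimit_subset_closure hp))
  obtain ⟨M, hMα, ⟨hMne, hMcl, hMT⟩, hMmin⟩ := exists_minimal_isClosed_mapsTo
    (genAlphaLimit_nonempty hsurj) isClosed_genAlphaLimit (mapsTo_genAlphaLimit hT)
  refine ⟨hnoper, M, hMα, hMne, hMcl, hMT, fun hfin => ?_,
    fun M' hM'M hM'ne hM'cl hM'T => hM'M.antisymm (hMmin ⟨hM'ne, hM'cl, hM'T⟩ hM'M)⟩
  obtain ⟨p, hpM, k, hk, hpk⟩ := hfin.exists_mem_periodicPts hMne hMT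
  exact hnoper p (hMα hpM) k hk hpk

/-- Let `(X, T)` be an l.r.s. system (on a compact metric space, `T` a continuous
surjection) and let `x ∈ X` be a non-periodic point.  Then the generalized α-limit set
`α(x)` contains no periodic point of `T`; in particular, `α(x)` contains an infinite
minimal subsystem. -/
theorem genAlphaLimit_no_periodic_points_of_lrs
    {X : Type*} [MetricSpace X] [CompactSpace X] [Nonempty X]
    (T : X → X) (hT : Continuous T) (hsurj : Function.Surjective T)
    (hlrs : IsLocallyRadiallyShrinking T)
    (x : X) (hx : ∀ k : ℕ, 1 ≤ k → T^[k] x ≠ x) :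
    (∀ p ∈ genAlphaLimit T x, ∀ k : ℕ, 1 ≤ k → T^[k] p ≠ p) ∧
    ∃ M : Set X, M ⊆ genAlphaLimit T x ∧ M.Nonempty ∧ IsClosed M ∧
      Set.MapsTo T M M ∧ M.Infinite ∧
      (∀ M' : Set X, M' ⊆ M → M'.Nonempty → IsClosed M' → Set.MapsTo T M' M' →
        M' = M) :=
  genAlphaLimit_no_periodic_points_of_lrs_general T hT hsurj hlrs x hx
end

section
/- Let (X,T) be a locally radially shrinking system and let p ∈ X be a periodic point of T. Then there exists an open set U containing p such that for every x ∈ U the ω-limit set ω_T(x) equals the (finite) orbit Orb(p) = {p, T(p), …, T^{k−1}(p)} of p, where k is the period of p. -/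
/-- The ω-limit set of `x` under `T`: the set of limit points of the forward orbit,
`ω_T(x) = ⋂ₙ closure {Tⁱ(x) : i ≥ n}`. -/
def omegaLimitSet {X : Type*} [MetricSpace X] (T : X → X) (x : X) : Set X :=
  ⋂ n : ℕ, closure {y : X | ∃ i : ℕ, n ≤ i ∧ T^[i] x = y}

/-!
Choose `ε` below the l.r.s. radii of the finitely many points of the orbit of `p`. For `x` within
`ε` of `p` the distances `d(Tⁿ x, Tⁿ p)` never increase, and `Tᵏ` strictly decreases the distance
to `p` on the punctured `ε`-ball. A cluster point `z` of `(Tᵏⁿ x)` and its image `Tᵏ z` then lie at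
the same distance `lim d(Tᵏⁿ x, p)` from `p`, which forces `z = p`. So the orbit of `x` is
asymptotic to the orbit of `p`, and asymptotic orbits have the same ω-limit set.
-/

open Filter Topology Function Metric

section

variable {X : Type*}

theorem finite_setOf_iterate_lt (T : X → X) (p : X) (k : ℕ) :
    {y : X | ∃ i : ℕ, i < k ∧ T^[i] p = y}.Finite :=
  ((Set.finite_Iio k).image fun i => T^[i] p).subset fun _ ⟨i, hi, hy⟩ => ⟨i, hi, hy⟩

theorem Function.IsPeriodicPt.iterate_mem_setOf_iterate_lt {T : X → X} {p : X} {k : ℕ}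
    (hk : 0 < k) (hp : IsPeriodicPt T k p) (n : ℕ) :
    T^[n] p ∈ {y : X | ∃ i : ℕ, i < k ∧ T^[i] p = y} :=
  ⟨n % k, Nat.mod_lt n hk, hp.iterate_mod_apply n⟩

end

section

variable {X : Type*} [MetricSpace X] {T : X → X}

theorem mem_omegaLimitSet_iff {x y : X} :
    y ∈ omegaLimitSet T x ↔ MapClusterPt y atTop (fun n => T^[n] x) := by
  rw [mapClusterPt_atTop_iff_forall_mem_closure, omegaLimitSet, Set.mem_iInter]
  rfl

theorem MapClusterPt.of_tendsto_dist {α : Type*} {F : Filter α} {u v : α → X} {y : X}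
    (hu : MapClusterPt y F u) (huv : Tendsto (fun a => dist (u a) (v a)) F (𝓝 0)) :
    MapClusterPt y F v := by
  rw [nhds_basis_ball.mapClusterPt_iff_frequently] at hu ⊢
  intro δ hδ
  have hclose : ∀ᶠ a in F, dist (u a) (v a) < δ / 2 :=
    huv.eventually (gt_mem_nhds (half_pos hδ))
  refine ((hu (δ / 2) (half_pos hδ)).and_eventually hclose).mono fun a ⟨hua, hclose⟩ => ?_
  calc dist (v a) y ≤ dist (u a) (v a) + dist (u a) y := dist_triangle_left _ _ _
    _ < δ / 2 + δ / 2 := add_lt_add hclose hua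
    _ = δ := add_halves δ

theorem omegaLimitSet_eq_of_tendsto_dist {x x' : X}
    (h : Tendsto (fun n => dist (T^[n] x) (T^[n] x')) atTop (𝓝 0)) :
    omegaLimitSet T x = omegaLimitSet T x' := by
  have h' : Tendsto (fun n => dist (T^[n] x') (T^[n] x)) atTop (𝓝 0) := by
    simpa only [dist_comm] using h
  ext y
  simp only [mem_omegaLimitSet_iff]
  exact ⟨fun hy => hy.of_tendsto_dist h, fun hy => hy.of_tendsto_dist h'⟩

theorem Function.IsPeriodicPt.omegaLimitSet_eq {p : X} {k : ℕ} (hk : 0 < k)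
    (hp : IsPeriodicPt T k p) :
    omegaLimitSet T p = {y : X | ∃ i : ℕ, i < k ∧ T^[i] p = y} := by
  ext y
  rw [mem_omegaLimitSet_iff]
  constructor
  · exact fun hy => (finite_setOf_iterate_lt T p k).isClosed.mem_of_mapClusterPt hy
      (Eventually.of_forall (hp.iterate_mem_setOf_iterate_lt hk))
  · rintro ⟨i, -, rfl⟩
    have hreturn : (fun m => T^[i + k * m] p) = fun _ => T^[i] p := by
      funext m
      rw [iterate_add_apply, (hp.mul_const m).eq]
    refine MapClusterPt.of_comp (φ := fun m => i + k * m) (p := atTop) ?_ ?_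
    · exact tendsto_atTop_mono
        (fun m => (Nat.le_mul_of_pos_left m hk).trans (Nat.le_add_left _ _)) tendsto_id
    · rw [comp_def, hreturn]
      exact tendsto_const_nhds.mapClusterPt

end

section

variable {X : Type*} [MetricSpace X]

theorem tendsto_iterate_of_dist_map_lt [ProperSpace X] {S : X → X} (hS : Continuous S) {p : X}
    (hp : S p = p) {ε : ℝ} (hshrink : ∀ z, z ≠ p → dist z p < ε → dist (S z) p < dist z p)
    {x : X} (hx : dist x p < ε) : Tendsto (fun n => S^[n] x) atTop (𝓝 p) := by
  set a : ℕ → ℝ := fun n => dist (S^[n] x) p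
  have hstep : ∀ z, dist z p < ε → dist (S z) p ≤ dist z p := fun z hz => by
    rcases eq_or_ne z p with rfl | hzp
    · rw [hp]
    · exact (hshrink z hzp hz).le
  have hsucc : ∀ n, a (n + 1) = dist (S (S^[n] x)) p := fun n => by
    simp only [a, iterate_succ_apply']
  have hlt : ∀ n, a n < ε := fun n => by
    induction n with
    | zero => exact hx
    | succ n ih => exact (hsucc n ▸ hstep _ ih).trans_lt ih
  have hanti : Antitone a :=
    antitone_nat_of_succ_le fun n => hsucc n ▸ hstep _ (hlt n)
  have hbdd : BddBelow (Set.range a) := ⟨0, Set.forall_mem_range.2 fun _ => dist_nonneg⟩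
  have ha : Tendsto a atTop (𝓝 (⨅ n, a n)) := tendsto_atTop_ciInf hanti hbdd
  obtain ⟨z, -, φ, hφ, hz⟩ := (isCompact_closedBall p (dist x p)).tendsto_subseq
    fun n => mem_closedBall.2 (hanti (Nat.zero_le n))
  have hφ' : Tendsto φ atTop atTop := hφ.tendsto_atTop
  have hza : dist z p = ⨅ n, a n :=
    tendsto_nhds_unique (hz.dist tendsto_const_nhds) (ha.comp hφ')
  have hSza : dist (S z) p = ⨅ n, a n := by
    refine tendsto_nhds_unique (((hS.tendsto z).comp hz).dist tendsto_const_nhds) ?_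
    simpa only [comp_def, hsucc] using ha.comp ((tendsto_add_atTop_nat 1).comp hφ')
  have hzp : z = p := by
    by_contra hzp
    have := hshrink z hzp (hza.trans_lt ((ciInf_le hbdd 0).trans_lt (hlt 0)))
    rw [hza, hSza] at this
    exact this.false
  rw [tendsto_iff_dist_tendsto_zero]
  simpa only [← hza, hzp, dist_self] using ha

variable (T : X → X) (p : X) (ε : ℝ)

def ShrinksAlongOrbit : Prop :=
  ∀ n a, a ≠ T^[n] p → dist a (T^[n] p) < ε → dist (T a) (T^[n + 1] p) < dist a (T^[n] p)

variable {T p ε}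

namespace ShrinksAlongOrbit

variable (h : ShrinksAlongOrbit T p ε)
include h

theorem dist_map_le {n : ℕ} {a : X} (ha : dist a (T^[n] p) < ε) :
    dist (T a) (T^[n + 1] p) ≤ dist a (T^[n] p) := by
  rcases eq_or_ne a (T^[n] p) with rfl | hne
  · rw [← iterate_succ_apply' T n p, dist_self, dist_self]
  · exact (h n a hne ha).le

theorem dist_iterate_le {n : ℕ} {a : X} (ha : dist a (T^[n] p) < ε) (m : ℕ) :
    dist (T^[m] a) (T^[m + n] p) ≤ dist a (T^[n] p) := by
  induction m with
  | zero => simp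
  | succ m ih =>
    calc dist (T^[m + 1] a) (T^[m + 1 + n] p)
        = dist (T (T^[m] a)) (T^[m + n + 1] p) := by
          rw [iterate_succ_apply', Nat.add_right_comm]
      _ ≤ dist (T^[m] a) (T^[m + n] p) := h.dist_map_le (ih.trans_lt ha)
      _ ≤ dist a (T^[n] p) := ih

theorem dist_iterate_lt {n : ℕ} {a : X} (hne : a ≠ T^[n] p) (ha : dist a (T^[n] p) < ε)
    {m : ℕ} (hm : 0 < m) : dist (T^[m] a) (T^[m + n] p) < dist a (T^[n] p) := by
  obtain ⟨m, rfl⟩ := Nat.exists_eq_add_of_lt hm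
  have hfirst := h n a hne ha
  calc dist (T^[0 + m + 1] a) (T^[0 + m + 1 + n] p)
      = dist (T^[m] (T a)) (T^[m + (n + 1)] p) := by
        rw [zero_add, iterate_succ_apply, Nat.add_right_comm, Nat.add_assoc]
    _ ≤ dist (T a) (T^[n + 1] p) := h.dist_iterate_le (hfirst.trans ha) m
    _ < dist a (T^[n] p) := hfirst

theorem tendsto_dist_iterate [ProperSpace X] (hT : Continuous T) {k : ℕ} (hk : 0 < k)
    (hp : IsPeriodicPt T k p) {x : X} (hx : dist x p < ε) :
    Tendsto (fun n => dist (T^[n] x) (T^[n] p)) atTop (𝓝 0) := by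
  set d : ℕ → ℝ := fun n => dist (T^[n] x) (T^[n] p)
  have hd : ∀ n, d n < ε := fun n => by
    simpa using (h.dist_iterate_le (n := 0) (by simpa using hx) n).trans_lt hx
  have hanti : Antitone d := antitone_nat_of_succ_le fun n => by
    simpa only [d, iterate_succ_apply'] using h.dist_map_le (hd n)
  have hreturn : Tendsto (fun n => (T^[k])^[n] x) atTop (𝓝 p) := by
    refine tendsto_iterate_of_dist_map_lt (hT.iterate k) hp (fun z hz hzε => ?_) hx
    simpa [hp.eq] using h.dist_iterate_lt (n := 0) (by simpa using hz) (by simpa using hzε) hk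
  have hmul : Tendsto (fun j => d (k * j)) atTop (𝓝 0) := by
    simpa only [d, iterate_mul, (hp.mul_const _).eq, ← tendsto_iff_dist_tendsto_zero]
      using hreturn
  exact squeeze_zero (fun n => dist_nonneg) (fun n => hanti (Nat.mul_div_le n k))
    (hmul.comp (Nat.tendsto_div_const_atTop hk.ne'))

end ShrinksAlongOrbit

end

namespace IsLocallyRadiallyShrinking

variable {X : Type*} [MetricSpace X] {T : X → X}

theorem exists_pos_forall_mem_of_finite (hT : IsLocallyRadiallyShrinking T) {S : Set X}
    (hS : S.Finite) :
    ∃ ε > 0, ∀ s ∈ S, ∀ y, y ≠ s → dist s y < ε → dist (T s) (T y) < dist s y := by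
  have hsmall : ∀ᶠ ε in 𝓝[>] (0 : ℝ),
      0 < ε ∧ ∀ s ∈ S, ∀ y, y ≠ s → dist s y < ε → dist (T s) (T y) < dist s y := by
    refine (eventually_mem_nhdsWithin (a := (0 : ℝ)) (s := Set.Ioi 0)).and
      ((eventually_all_finite hS).2 fun s _ => ?_)
    obtain ⟨εs, hεs, hs⟩ := hT s
    filter_upwards [Ioo_mem_nhdsGT hεs] with ε hε y hy hys using hs y hy (hys.trans hε.2)
  obtain ⟨ε, hε, hshrink⟩ := hsmall.exists
  exact ⟨ε, hε, hshrink⟩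

theorem exists_shrinksAlongOrbit (hT : IsLocallyRadiallyShrinking T) {p : X} {k : ℕ}
    (hk : 0 < k) (hp : IsPeriodicPt T k p) : ∃ ε > 0, ShrinksAlongOrbit T p ε := by
  obtain ⟨ε, hε, hshrink⟩ := hT.exists_pos_forall_mem_of_finite (finite_setOf_iterate_lt T p k)
  refine ⟨ε, hε, fun n a hne ha => ?_⟩
  rw [iterate_succ_apply', dist_comm, dist_comm a]
  exact hshrink _ (hp.iterate_mem_setOf_iterate_lt hk n) a hne (dist_comm a _ ▸ ha)

end IsLocallyRadiallyShrinking

theorem lrs_periodic_point_attracts_neighborhood_general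
    {X : Type*} [MetricSpace X] [CompactSpace X]
    (T : X → X) (hT : Continuous T)
    (hlrs : IsLocallyRadiallyShrinking T)
    (p : X) (k : ℕ) (hk : 0 < k) (hper : T^[k] p = p) :
    ∃ U : Set X, IsOpen U ∧ p ∈ U ∧
      ∀ x ∈ U, omegaLimitSet T x = {y : X | ∃ i : ℕ, i < k ∧ T^[i] p = y} := by
  obtain ⟨ε, hε, hshrink⟩ := hlrs.exists_shrinksAlongOrbit hk hper
  refine ⟨ball p ε, isOpen_ball, mem_ball_self hε, fun x hx => ?_⟩
  rw [omegaLimitSet_eq_of_tendsto_dist (hshrink.tendsto_dist_iterate hT hk hper hx),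
    IsPeriodicPt.omegaLimitSet_eq hk hper]

/-- Let `(X, T)` be an l.r.s. system and `p` a periodic point with (least) period `k`.
Then there is an open set `U ∋ p` such that `ω_T(x) = Orb(p) = {p, T p, …, T^[k-1] p}`
for every `x ∈ U`. -/
theorem lrs_periodic_point_attracts_neighborhood
    {X : Type*} [MetricSpace X] [CompactSpace X] [Nonempty X]
    (T : X → X) (hT : Continuous T) (hsurj : Function.Surjective T)
    (hlrs : IsLocallyRadiallyShrinking T)
    (p : X) (k : ℕ) (hk : 0 < k) (hper : T^[k] p = p)
    (hleast : ∀ m : ℕ, 0 < m → m < k → T^[m] p ≠ p) :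
    ∃ U : Set X, IsOpen U ∧ p ∈ U ∧
      ∀ x ∈ U, omegaLimitSet T x = {y : X | ∃ i : ℕ, i < k ∧ T^[i] p = y} :=
  lrs_periodic_point_attracts_neighborhood_general T hT hlrs p k hk hper
end

section
/- If a locally radially shrinking system (X,T) is topologically transitive and has a periodic point p, then X = Orb(p); that is, X is finite and equals the periodic orbit of p. -/
open Filter Function Set Topology

section

variable {X : Type*} [MetricSpace X]

namespace IsLocallyRadiallyShrinking

theorem comp {f g : X → X} (hg : IsLocallyRadiallyShrinking g)
    (hf : IsLocallyRadiallyShrinking f) : IsLocallyRadiallyShrinking (g ∘ f) := by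
  intro x
  obtain ⟨εf, hεf, hf⟩ := hf x
  obtain ⟨εg, hεg, hg⟩ := hg (f x)
  refine ⟨min εf εg, lt_min hεf hεg, fun y hne hy => ?_⟩
  have hfxy := hf y hne (hy.trans_le (min_le_left _ _))
  rcases eq_or_ne (f y) (f x) with heq | hne'
  · simpa [heq] using hne.symm
  · exact (hg _ hne' (hfxy.trans (hy.trans_le (min_le_right _ _)))).trans hfxy

theorem iterate {T : X → X} (hT : IsLocallyRadiallyShrinking T) {n : ℕ} (hn : 0 < n) :
    IsLocallyRadiallyShrinking T^[n] := by
  obtain ⟨n, rfl⟩ := Nat.exists_eq_add_one_of_ne_zero hn.ne'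
  induction n with
  | zero => simpa
  | succ n ih => rw [iterate_succ]; exact (ih n.succ_pos).comp hT

end IsLocallyRadiallyShrinking

-- A discrete form of LaSalle's invariance principle.
theorem exists_tendsto_apply_iterate_of_antitone [CompactSpace X] {S : X → X} (hS : Continuous S)
    {V : X → ℝ} (hV : Continuous V) {x : X} (hanti : Antitone fun n => V (S^[n] x)) :
    ∃ w, Tendsto (fun n => V (S^[n] x)) atTop (𝓝 (V w)) ∧ V (S w) = V w := by
  obtain ⟨w, -, φ, hφ, hw⟩ := isCompact_univ.tendsto_subseq (x := fun n => S^[n] x)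
    fun _ => mem_univ _
  have hbdd : BddBelow (range fun n => V (S^[n] x)) :=
    (isCompact_range hV).bddBelow.mono (range_comp_subset_range _ V)
  have hlim := tendsto_atTop_ciInf hanti hbdd
  have hVw : V w = ⨅ n, V (S^[n] x) :=
    tendsto_nhds_unique ((hV.tendsto w).comp hw) (hlim.comp hφ.tendsto_atTop)
  have hshift : Tendsto (fun i => V (S (S^[φ i] x))) atTop (𝓝 (V (S w))) :=
    ((hV.comp hS).tendsto w).comp hw
  simp only [← iterate_succ_apply' S] at hshift
  refine ⟨w, hVw ▸ hlim, tendsto_nhds_unique hshift ?_⟩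
  exact hVw ▸ hlim.comp ((tendsto_add_atTop_nat 1).comp hφ.tendsto_atTop)

theorem IsLocallyRadiallyShrinking.eventually_tendsto_iterate [CompactSpace X] {S : X → X}
    (hS : Continuous S) (hlrs : IsLocallyRadiallyShrinking S) {p : X} (hp : IsFixedPt S p) :
    ∀ᶠ x in 𝓝 p, Tendsto (fun n => S^[n] x) atTop (𝓝 p) := by
  obtain ⟨ε, hε, hshrink⟩ := hlrs p
  have hstrict : ∀ y ≠ p, dist y p < ε → dist (S y) p < dist y p := fun y hne hy => by
    simpa [dist_comm, hp.eq] using hshrink y hne (by rwa [dist_comm])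
  have hstep : ∀ y, dist y p < ε → dist (S y) p ≤ dist y p := fun y hy => by
    rcases eq_or_ne y p with rfl | hne
    · simp [hp.eq]
    · exact (hstrict y hne hy).le
  filter_upwards [Metric.ball_mem_nhds p hε] with x hx
  have hball : ∀ n, dist (S^[n] x) p < ε := by
    intro n
    induction n with
    | zero => exact hx
    | succ n ih => rw [iterate_succ_apply']; exact (hstep _ ih).trans_lt ih
  have hanti : Antitone fun n => dist (S^[n] x) p := antitone_nat_of_succ_le fun n => by
    rw [iterate_succ_apply']; exact hstep _ (hball n)
  obtain ⟨w, hlim, hw⟩ :=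
    exists_tendsto_apply_iterate_of_antitone hS (continuous_id.dist continuous_const) hanti
  suffices w = p by simpa [this, ← tendsto_iff_dist_tendsto_zero] using hlim
  by_contra hne
  exact (hstrict w hne ((hanti.le_of_tendsto hlim 0).trans_lt (hball 0))).ne hw

theorem Filter.Tendsto.of_forall_add_mul {α : Type*} {l : Filter α} {u : ℕ → α} {k : ℕ}
    (hk : 0 < k) (h : ∀ r < k, Tendsto (fun m => u (r + k * m)) atTop l) :
    Tendsto u atTop l := by
  refine fun s hs => mem_map.2 ?_
  have hall : ∀ᶠ m in atTop, ∀ r ∈ Iio k, u (r + k * m) ∈ s :=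
    (eventually_all_finite (finite_Iio k)).2 fun r hr => h r hr hs
  obtain ⟨M, hM⟩ := eventually_atTop.1 hall
  filter_upwards [eventually_ge_atTop (k * M)] with n hn
  show u n ∈ s
  simpa only [Nat.mod_add_div] using
    hM (n / k) ((Nat.le_div_iff_mul_le hk).2 (mul_comm M k ▸ hn)) (n % k) (Nat.mod_lt n hk)

theorem tendsto_iterate_nhdsSet_range_iterate {T : X → X} (hT : Continuous T) {k : ℕ}
    (hk : 0 < k) {x p : X} (hx : Tendsto (fun m => (T^[k])^[m] x) atTop (𝓝 p)) :
    Tendsto (fun n => T^[n] x) atTop (𝓝ˢ (range fun i => T^[i] p)) := by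
  refine .of_forall_add_mul hk fun r _ => ?_
  simp only [iterate_add_apply, iterate_mul]
  exact (((hT.iterate r).tendsto p).comp hx).mono_right (nhds_le_nhdsSet ⟨r, rfl⟩)

theorem DenseRange.iterate_add {T : X → X} (hT : Continuous T) (hsurj : Surjective T) {z : X}
    (hz : DenseRange fun n => T^[n] z) (N : ℕ) : DenseRange fun n => T^[n + N] z := by
  convert (hsurj.iterate N).denseRange.comp hz (hT.iterate N) using 2 with n
  rw [comp_apply, ← iterate_add_apply, add_comm]

theorem eq_univ_of_tendsto_nhdsSet_of_denseRange_add {Y : Type*} [TopologicalSpace Y]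
    [RegularSpace Y] {u : ℕ → Y} {K : Set Y} (hK : IsClosed K) (hu : Tendsto u atTop (𝓝ˢ K))
    (hdense : ∀ N, DenseRange fun n => u (n + N)) : K = univ := by
  refine eq_univ_of_forall fun y => by_contra fun hy => ?_
  obtain ⟨U, hU, V, hV, hUV⟩ :=
    Filter.disjoint_iff.1 (disjoint_nhdsSet_nhds.2 (hK.closure_eq.symm ▸ hy))
  obtain ⟨N, hN⟩ := eventually_atTop.1 (hu hU)
  obtain ⟨_, ⟨n, rfl⟩, hn⟩ := (hdense N).inter_nhds_nonempty hV
  exact hUV.notMem_of_mem_left (hN _ (Nat.le_add_left N n)) hn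

end

theorem lrs_transitive_with_periodic_point_is_periodic_orbit_general
    {X : Type*} [MetricSpace X] [CompactSpace X]
    (T : X → X) (hT : Continuous T) (hsurj : Function.Surjective T)
    (hlrs : IsLocallyRadiallyShrinking T)
    (htrans : ∃ z : X, Dense (Set.range fun n : ℕ => T^[n] z))
    (p : X) (k : ℕ) (hk : 1 ≤ k) (hper : T^[k] p = p) :
    Finite X ∧ Set.univ = Set.range fun i : ℕ => T^[i] p := by
  obtain ⟨z, hz⟩ := htrans
  have hfin : (range fun i => T^[i] p).Finite :=
    ((finite_Iio k).image fun i => T^[i] p).subset <| range_subset_iff.2 fun i =>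
      ⟨i % k, Nat.mod_lt i hk, IsPeriodicPt.iterate_mod_apply hper i⟩
  obtain ⟨_, ⟨N, rfl⟩, hN⟩ := hz.inter_nhds_nonempty <|
    (hlrs.iterate hk).eventually_tendsto_iterate (hT.iterate k) hper
  have hattract : Tendsto (fun n => T^[n] z) atTop (𝓝ˢ (range fun i => T^[i] p)) := by
    rw [← tendsto_add_atTop_iff_nat N]
    simpa only [iterate_add_apply] using tendsto_iterate_nhdsSet_range_iterate hT hk hN
  have huniv := eq_univ_of_tendsto_nhdsSet_of_denseRange_add hfin.isClosed hattract
    (DenseRange.iterate_add hT hsurj hz)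
  exact ⟨finite_univ_iff.1 (huniv ▸ hfin), huniv.symm⟩

/-- If an l.r.s. system `(X, T)` is topologically transitive (some forward orbit is
dense) and has a periodic point `p`, then `X = Orb(p)`: `X` is finite and every point
of `X` lies on the periodic orbit of `p`. -/
theorem lrs_transitive_with_periodic_point_is_periodic_orbit
    {X : Type*} [MetricSpace X] [CompactSpace X] [Nonempty X]
    (T : X → X) (hT : Continuous T) (hsurj : Function.Surjective T)
    (hlrs : IsLocallyRadiallyShrinking T)
    (htrans : ∃ z : X, Dense (Set.range fun n : ℕ => T^[n] z))
    (p : X) (k : ℕ) (hk : 1 ≤ k) (hper : T^[k] p = p) :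
    Finite X ∧ Set.univ = Set.range fun i : ℕ => T^[i] p :=
  lrs_transitive_with_periodic_point_is_periodic_orbit_general T hT hsurj hlrs htrans p k hk hper
end

section
/- Let (X,T) be a locally radially shrinking system, let q ∈ X be a fixed point of T, and let x ∈ X with x ≠ q. Then there exists an open set V containing q such that x ∉ V and T(V) ⊆ V. -/
open Metric

theorem IsLocallyRadiallyShrinking.exists_mapsTo_ball_of_isFixedPt {X : Type*} [MetricSpace X]
    {T : X → X} (hT : IsLocallyRadiallyShrinking T) {q : X} (hq : Function.IsFixedPt T q) :
    ∃ ε > 0, ∀ r ≤ ε, Set.MapsTo T (ball q r) (ball q r) := by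
  obtain ⟨ε, hε, hshrink⟩ := hT q
  refine ⟨ε, hε, fun r hr y hy => ?_⟩
  rcases eq_or_ne y q with rfl | hyq
  · rwa [hq.eq]
  rw [mem_ball'] at hy ⊢
  calc dist q (T y) = dist (T q) (T y) := by rw [hq.eq]
    _ < dist q y := hshrink y hyq (hy.trans_le hr)
    _ < r := hy

theorem lrs_fixed_point_has_invariant_neighborhood_general
    {X : Type*} [MetricSpace X]
    (T : X → X)
    (hlrs : IsLocallyRadiallyShrinking T)
    (q : X) (hq : T q = q) (x : X) (hx : x ≠ q) :
    ∃ V : Set X, IsOpen V ∧ q ∈ V ∧ x ∉ V ∧ Set.MapsTo T V V := by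
  obtain ⟨ε, hε, hmaps⟩ := hlrs.exists_mapsTo_ball_of_isFixedPt hq
  have hr : 0 < min ε (dist q x) := lt_min hε (dist_pos.mpr hx.symm)
  refine ⟨ball q (min ε (dist q x)), isOpen_ball, mem_ball_self hr, ?_, hmaps _ (min_le_left _ _)⟩
  rw [mem_ball', not_lt]
  exact min_le_right _ _

/-- Let `(X, T)` be an l.r.s. system, `q` a fixed point of `T`, and `x ≠ q`.  Then
there is an open set `V ∋ q` with `x ∉ V` and `T(V) ⊆ V`. -/
theorem lrs_fixed_point_has_invariant_neighborhood
    {X : Type*} [MetricSpace X] [CompactSpace X] [Nonempty X]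
    (T : X → X) (hT : Continuous T) (hsurj : Function.Surjective T)
    (hlrs : IsLocallyRadiallyShrinking T)
    (q : X) (hq : T q = q) (x : X) (hx : x ≠ q) :
    ∃ V : Set X, IsOpen V ∧ q ∈ V ∧ x ∉ V ∧ Set.MapsTo T V V :=
  lrs_fixed_point_has_invariant_neighborhood_general T hlrs q hq x hx
end

section
/- Every minimal Cantor system (C,T) is topologically conjugate to a locally radially shrinking system on a compact subset of ℝ: there exist a compact set X ⊆ ℝ, a continuous surjection f : X → X satisfying the locally radially shrinking condition, and a homeomorphism π : C → X with π ∘ T = f ∘ π. -/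
/-!
Take pairwise disjoint nonempty clopen sets `U m` (they exist as `C` is perfect) and a sequence of
clopen sets separating points; by minimality and compactness every orbit enters `U m` within a
uniformly bounded time. The level-`m+1` code of `x` records its itinerary through a finite clopen
partition until its first visit to `U m`, plus a fixed margin. These codes are locally constant,
refine each other and separate points, and for `x ∉ U m` the code of `T x` is the tail of that of
`x`, so `T` maps level-`m+1` cells into level-`m+1` cells.

Embed `C` into `ℝ` by nested intervals indexed by the codes, the level-`m+1` interval of `x` having
width proportional to `α ^ (time for x to reach U m)`, where `α` exceeds the ratio between the
widths and the gaps of that level. If `x ∉ U m` and `y` shares the level-`m+1` cell of `x` but not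
the next one, then in these coordinates `|T x - T y| ≤ width / α < gap ≤ |x - y|`. As `x` lies in
at most one `U m`, this holds at all fine levels, i.e. for all `y` near `x`.
-/

open Set Filter Topology Function

/-- `[left m x, left m x + width m x]` is the level-`m` interval of `x`; it depends only on the
digits below `m`. It is cut into `card m` slots, the level-`m+1` interval starts at the left end of
slot number `digit m x` and covers at most half of that slot. -/
structure IntervalScheme (C : Type*) where
  digit : ℕ → C → ℕ
  card : ℕ → ℕ
  width : ℕ → C → ℝ
  digit_lt_card : ∀ m x, digit m x < card m
  width_pos : ∀ m x, 0 < width m x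
  width_succ_le : ∀ m x, width (m + 1) x ≤ width m x / (2 * card m)
  width_congr : ∀ m x y, (∀ k < m, digit k x = digit k y) → width m x = width m y

namespace IntervalScheme

variable {C : Type*} (S : IntervalScheme C)

noncomputable def gap (m : ℕ) (x : C) : ℝ := S.width m x / (2 * S.card m)

noncomputable def left (m : ℕ) (x : C) : ℝ :=
  ∑ k ∈ Finset.range m, S.digit k x * (S.width k x / S.card k)

noncomputable def point (x : C) : ℝ := ⨆ m, S.left m x

lemma one_le_card (m : ℕ) (x : C) : (1 : ℝ) ≤ S.card m := by
  exact_mod_cast (Nat.zero_le _).trans_lt (S.digit_lt_card m x)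

lemma gap_pos (m : ℕ) (x : C) : 0 < S.gap m x := by
  have := S.one_le_card m x
  exact div_pos (S.width_pos m x) (by positivity)

lemma gap_le_half_width (m : ℕ) (x : C) : S.gap m x ≤ S.width m x / 2 := by
  have := S.one_le_card m x
  exact div_le_div_of_nonneg_left (S.width_pos m x).le two_pos (by linarith)

lemma gap_succ_le (m : ℕ) (x : C) : S.gap (m + 1) x ≤ S.gap m x :=
  calc S.gap (m + 1) x ≤ S.width (m + 1) x / 2 := S.gap_le_half_width _ _
    _ ≤ S.width (m + 1) x := by linarith [S.width_pos (m + 1) x]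
    _ ≤ S.gap m x := S.width_succ_le m x

lemma gap_anti (x : C) : Antitone fun m => S.gap m x :=
  antitone_nat_of_succ_le fun m => S.gap_succ_le m x

lemma width_le_mul_inv_two_pow (m : ℕ) (x : C) : S.width m x ≤ S.width 0 x * 2⁻¹ ^ m := by
  induction m with
  | zero => simp
  | succ m ih =>
    calc S.width (m + 1) x ≤ S.gap m x := S.width_succ_le m x
      _ ≤ S.width m x / 2 := S.gap_le_half_width m x
      _ = S.width m x * 2⁻¹ := div_eq_mul_inv _ _
      _ ≤ S.width 0 x * 2⁻¹ ^ (m + 1) := by rw [pow_succ, ← mul_assoc]; gcongr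

lemma left_succ (m : ℕ) (x : C) :
    S.left (m + 1) x = S.left m x + S.digit m x * (S.width m x / S.card m) :=
  Finset.sum_range_succ _ _

lemma left_congr {m : ℕ} {x y : C} (h : ∀ k < m, S.digit k x = S.digit k y) :
    S.left m x = S.left m y := by
  refine Finset.sum_congr rfl fun k hk => ?_
  rw [Finset.mem_range] at hk
  rw [h k hk, S.width_congr k x y fun j hj => h j (hj.trans hk)]

lemma left_succ_add_width_add_gap_le (m : ℕ) (x : C) :
    S.left (m + 1) x + S.width (m + 1) x + S.gap m x ≤ S.left m x + S.width m x := by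
  have hN := S.one_le_card m x
  have hd : (S.digit m x : ℝ) + 1 ≤ S.card m := by exact_mod_cast S.digit_lt_card m x
  have hs : 0 ≤ S.width m x / S.card m := (div_pos (S.width_pos m x) (by linarith)).le
  have hgap : S.gap m x = S.width m x / S.card m / 2 := by rw [gap, div_div, mul_comm]
  have hw : S.width m x = S.card m * (S.width m x / S.card m) := by field_simp
  have hwg : S.width (m + 1) x ≤ S.gap m x := S.width_succ_le m x
  rw [S.left_succ]
  nlinarith

lemma left_mono (x : C) : Monotone fun m => S.left m x := by
  refine monotone_nat_of_le_succ fun m => ?_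
  rw [S.left_succ, le_add_iff_nonneg_right]
  have := S.one_le_card m x
  have := S.width_pos m x
  positivity

lemma left_add_width_anti (x : C) : Antitone fun m => S.left m x + S.width m x :=
  antitone_nat_of_succ_le fun m => by
    linarith [S.left_succ_add_width_add_gap_le m x, S.gap_pos m x]

lemma left_le_left_add_width (k m : ℕ) (x : C) : S.left k x ≤ S.left m x + S.width m x := by
  rcases le_total k m with h | h
  · linarith [S.left_mono x h, S.width_pos m x]
  · linarith [S.left_add_width_anti x h, S.width_pos k x]

lemma left_le_point (m : ℕ) (x : C) : S.left m x ≤ S.point x :=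
  le_ciSup ⟨_, forall_mem_range.2 fun k => S.left_le_left_add_width k 0 x⟩ m

lemma point_le_left_add_width (m : ℕ) (x : C) : S.point x ≤ S.left m x + S.width m x :=
  ciSup_le fun k => S.left_le_left_add_width k m x

lemma abs_point_sub_le {m : ℕ} {x y : C} (h : ∀ k < m, S.digit k x = S.digit k y) :
    |S.point x - S.point y| ≤ S.width m x := by
  have hl := S.left_congr h
  have hw := S.width_congr m x y h
  rw [abs_sub_le_iff]
  constructor <;> linarith [S.left_le_point m x, S.left_le_point m y,
    S.point_le_left_add_width m x, S.point_le_left_add_width m y]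

lemma gap_le_point_sub {m : ℕ} {x y : C} (h : ∀ k < m, S.digit k x = S.digit k y)
    (hlt : S.digit m x < S.digit m y) : S.gap m x ≤ S.point y - S.point x := by
  have hl := S.left_congr h
  have hw := S.width_congr m x y h
  have hd : (S.digit m x : ℝ) + 1 ≤ S.digit m y := by exact_mod_cast hlt
  have hs : 0 ≤ S.width m x / S.card m :=
    (div_pos (S.width_pos m x) (by linarith [S.one_le_card m x])).le
  have h1 := S.point_le_left_add_width (m + 1) x
  have h2 := S.left_le_point (m + 1) y
  have h3 : S.width (m + 1) x ≤ S.width m x / S.card m / 2 := by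
    rw [div_div, mul_comm]; exact S.width_succ_le m x
  rw [S.left_succ] at h1 h2
  rw [← hl, ← hw] at h2
  rw [gap, mul_comm, ← div_div]
  nlinarith

lemma gap_le_abs_point_sub {m : ℕ} {x y : C} (h : ∀ k < m, S.digit k x = S.digit k y)
    (hne : S.digit m x ≠ S.digit m y) : S.gap m x ≤ |S.point x - S.point y| := by
  rcases hne.lt_or_gt with hlt | hlt
  · rw [abs_sub_comm]
    exact (S.gap_le_point_sub h hlt).trans (le_abs_self _)
  · have hgap : S.gap m y = S.gap m x := by rw [gap, gap, S.width_congr m x y h]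
    exact hgap ▸ (S.gap_le_point_sub (fun k hk => (h k hk).symm) hlt).trans (le_abs_self _)

lemma exists_first_digit_ne {x y : C} (h : ∃ m, S.digit m x ≠ S.digit m y) :
    ∃ m, (∀ k < m, S.digit k x = S.digit k y) ∧ S.digit m x ≠ S.digit m y := by
  classical
  exact ⟨Nat.find h, fun k hk => not_not.1 (Nat.find_min h hk), Nat.find_spec h⟩

lemma point_injective (hsep : ∀ x y, x ≠ y → ∃ m, S.digit m x ≠ S.digit m y) :
    Injective S.point := by
  intro x y hxy
  by_contra hne
  obtain ⟨m, hm, hdm⟩ := S.exists_first_digit_ne (hsep x y hne)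
  have := S.gap_le_abs_point_sub hm hdm
  rw [hxy, sub_self, abs_zero] at this
  exact (S.gap_pos m x).not_ge this

lemma continuous_point [TopologicalSpace C] (hloc : ∀ m, IsLocallyConstant (S.digit m)) :
    Continuous S.point := by
  refine continuous_iff_continuousAt.2 fun x => Metric.tendsto_nhds.2 fun ε hε => ?_
  obtain ⟨m, hm⟩ := exists_pow_lt_of_lt_one (div_pos hε (S.width_pos 0 x)) two_inv_lt_one
  have hnear : ∀ᶠ y in 𝓝 x, ∀ k ∈ Iio m, S.digit k y = S.digit k x :=
    (eventually_all_finite (finite_Iio m)).2 fun k _ => (hloc k).eventually_eq x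
  filter_upwards [hnear] with y hy
  have hw0 := S.width_congr 0 y x (by simp)
  rw [Real.dist_eq]
  calc |S.point y - S.point x| ≤ S.width m y := S.abs_point_sub_le hy
    _ ≤ S.width 0 y * 2⁻¹ ^ m := S.width_le_mul_inv_two_pow m y
    _ < ε := hw0 ▸ (lt_div_iff₀' (S.width_pos 0 x)).1 hm

lemma exists_lrs_radius (f : C → C) (hsep : ∀ x y, x ≠ y → ∃ m, S.digit m x ≠ S.digit m y)
    {x : C}
    (hx : ∃ M, ∀ m ≥ M, ∀ y, (∀ k < m, S.digit k x = S.digit k y) →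
      |S.point (f x) - S.point (f y)| < S.gap m x) :
    ∃ ε > 0, ∀ y, S.point y ≠ S.point x → |S.point x - S.point y| < ε →
      |S.point (f x) - S.point (f y)| < |S.point x - S.point y| := by
  obtain ⟨M, hM⟩ := hx
  refine ⟨S.gap M x, S.gap_pos M x, fun y hne hlt => ?_⟩
  obtain ⟨m, hm, hdm⟩ := S.exists_first_digit_ne (hsep x y fun h => hne (h ▸ rfl))
  have hgap := S.gap_le_abs_point_sub hm hdm
  have hMm : M ≤ m := by
    by_contra! h
    linarith [S.gap_anti x h.le]
  exact (hM m hMm y hm).trans_le hgap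

end IntervalScheme

section HitTime

variable {C : Type*} (T : C → C)

noncomputable def hitTime (s : Set C) (x : C) : ℕ := sInf {j | T^[j] x ∈ s}

variable {T} {s : Set C} {x y : C}

lemma iterate_hitTime_mem (h : ∃ j, T^[j] x ∈ s) : T^[hitTime T s x] x ∈ s := Nat.sInf_mem h

lemma hitTime_le {j : ℕ} (h : T^[j] x ∈ s) : hitTime T s x ≤ j := Nat.sInf_le h

lemma hitTime_eq_zero_iff (h : ∃ j, T^[j] x ∈ s) : hitTime T s x = 0 ↔ x ∈ s :=
  ⟨fun h0 => by simpa [h0] using iterate_hitTime_mem h,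
    fun hx => Nat.le_zero.1 (hitTime_le (j := 0) hx)⟩

lemma hitTime_apply_add_one (hx : x ∉ s) (h : ∃ j, T^[j] x ∈ s) :
    hitTime T s (T x) + 1 = hitTime T s x :=
  Nat.sInf_add (p := fun j => T^[j] x ∈ s) (Nat.one_le_iff_ne_zero.2 fun h0 =>
    hx ((hitTime_eq_zero_iff h).1 h0))

lemma hitTime_eq_of_forall_iff {G : ℕ} (hx : ∃ j ≤ G, T^[j] x ∈ s) (hy : ∃ j ≤ G, T^[j] y ∈ s)
    (h : ∀ i ≤ G, (T^[i] x ∈ s ↔ T^[i] y ∈ s)) : hitTime T s x = hitTime T s y := by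
  obtain ⟨j, hjG, hj⟩ := hx
  obtain ⟨k, hkG, hk⟩ := hy
  have hxG := (hitTime_le hj).trans hjG
  have hyG := (hitTime_le hk).trans hkG
  exact le_antisymm
    (hitTime_le ((h _ hyG).2 (iterate_hitTime_mem ⟨k, hk⟩)))
    (hitTime_le ((h _ hxG).1 (iterate_hitTime_mem ⟨j, hj⟩)))

end HitTime

section ItineraryCode

variable {C Q : Type*} (T : C → C) (U : ℕ → Set C) (q : ℕ → C → Q) (g : ℕ → ℕ)

/-- The margin `∑ k < m, g k` makes each code determine the coarser ones; stopping at the first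
visit to `U m` makes the code of `T x` the tail of that of `x` when `x ∉ U m`. -/
noncomputable def itineraryCode : ℕ → C → List Q
  | 0, _ => []
  | m + 1, x => (List.range (hitTime T (U m) x + ∑ k ∈ Finset.range m, g k + 1)).map
      fun i => q m (T^[i] x)

variable {T U q g}

lemma itineraryCode_succ_eq_cons (m : ℕ) (x : C) :
    itineraryCode T U q g (m + 1) x = q m x ::
      (List.range (hitTime T (U m) x + ∑ k ∈ Finset.range m, g k)).map
        fun i => q m (T^[i] (T x)) := by
  simp [itineraryCode, List.range_succ_eq_map, comp_def, iterate_succ_apply]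

lemma hitTime_eq_of_itineraryCode_eq {m : ℕ} {x y : C}
    (h : itineraryCode T U q g (m + 1) x = itineraryCode T U q g (m + 1) y) :
    hitTime T (U m) x = hitTime T (U m) y := by
  have := congrArg List.length h
  simp only [itineraryCode, List.length_map, List.length_range] at this
  omega

lemma apply_iterate_eq_of_itineraryCode_eq {m : ℕ} {x y : C}
    (h : itineraryCode T U q g (m + 1) x = itineraryCode T U q g (m + 1) y) {i : ℕ}
    (hi : i ≤ hitTime T (U m) x + ∑ k ∈ Finset.range m, g k) :
    q m (T^[i] x) = q m (T^[i] y) := by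
  have hn := hitTime_eq_of_itineraryCode_eq h
  rw [itineraryCode, itineraryCode, ← hn, List.map_inj_left] at h
  exact h i (List.mem_range.2 (Nat.lt_succ_of_le hi))

lemma itineraryCode_succ_eq_of_forall (hit : ∀ m x, ∃ j ≤ g m, T^[j] x ∈ U m)
    (hqU : ∀ m x y, q m x = q m y → (x ∈ U m ↔ y ∈ U m)) {m : ℕ} {x y : C}
    (h : ∀ i ≤ g m + ∑ k ∈ Finset.range m, g k, q m (T^[i] x) = q m (T^[i] y)) :
    itineraryCode T U q g (m + 1) x = itineraryCode T U q g (m + 1) y := by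
  have hn : hitTime T (U m) x = hitTime T (U m) y :=
    hitTime_eq_of_forall_iff (hit m x) (hit m y) fun i hi =>
      hqU m _ _ (h i (hi.trans (Nat.le_add_right _ _)))
  obtain ⟨j, hj, hjx⟩ := hit m x
  simp only [itineraryCode, ← hn]
  refine List.map_congr_left fun i hi => h i ?_
  have := (hitTime_le hjx).trans hj
  simp only [List.mem_range] at hi
  omega

lemma itineraryCode_succ_apply {m : ℕ} {x : C} (hx : x ∉ U m) (hit : ∃ j, T^[j] x ∈ U m) :
    itineraryCode T U q g (m + 1) x = q m x :: itineraryCode T U q g (m + 1) (T x) := by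
  rw [itineraryCode_succ_eq_cons, itineraryCode, ← hitTime_apply_add_one hx hit,
    Nat.add_right_comm]

lemma itineraryCode_succ_ne {m : ℕ} {x y : C} (h : q m x ≠ q m y) :
    itineraryCode T U q g (m + 1) x ≠ itineraryCode T U q g (m + 1) y := by
  rw [itineraryCode_succ_eq_cons, itineraryCode_succ_eq_cons]
  exact fun h' => h (List.cons.inj h').1

lemma itineraryCode_succ_apply_eq (hit : ∀ m x, ∃ j ≤ g m, T^[j] x ∈ U m) {m : ℕ} {x y : C}
    (hx : x ∉ U m) (h : itineraryCode T U q g (m + 1) x = itineraryCode T U q g (m + 1) y) :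
    itineraryCode T U q g (m + 1) (T x) = itineraryCode T U q g (m + 1) (T y) := by
  have hit' : ∀ z, ∃ j, T^[j] z ∈ U m := fun z => (hit m z).imp fun _ hj => hj.2
  have hy : y ∉ U m := by
    rwa [← hitTime_eq_zero_iff (hit' y), ← hitTime_eq_of_itineraryCode_eq h,
      hitTime_eq_zero_iff (hit' x)]
  rw [itineraryCode_succ_apply hx (hit' x), itineraryCode_succ_apply hy (hit' y)] at h
  exact (List.cons.inj h).2

lemma itineraryCode_eq_of_succ_eq (hit : ∀ m x, ∃ j ≤ g m, T^[j] x ∈ U m)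
    (hqU : ∀ m x y, q m x = q m y → (x ∈ U m ↔ y ∈ U m))
    (hq_succ : ∀ m x y, q (m + 1) x = q (m + 1) y → q m x = q m y) {m : ℕ} {x y : C}
    (h : itineraryCode T U q g (m + 1) x = itineraryCode T U q g (m + 1) y) :
    itineraryCode T U q g m x = itineraryCode T U q g m y := by
  cases m with
  | zero => rfl
  | succ m =>
    refine itineraryCode_succ_eq_of_forall hit hqU fun i hi =>
      hq_succ m _ _ (apply_iterate_eq_of_itineraryCode_eq h ?_)
    rw [Finset.sum_range_succ]
    omega

lemma itineraryCode_eq_of_le (hit : ∀ m x, ∃ j ≤ g m, T^[j] x ∈ U m)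
    (hqU : ∀ m x y, q m x = q m y → (x ∈ U m ↔ y ∈ U m))
    (hq_succ : ∀ m x y, q (m + 1) x = q (m + 1) y → q m x = q m y) {k m : ℕ} (hkm : k ≤ m)
    {x y : C} (h : itineraryCode T U q g m x = itineraryCode T U q g m y) :
    itineraryCode T U q g k x = itineraryCode T U q g k y := by
  induction m, hkm using Nat.le_induction with
  | base => exact h
  | succ m _ ih => exact ih (itineraryCode_eq_of_succ_eq hit hqU hq_succ h)

lemma isLocallyConstant_itineraryCode [TopologicalSpace C] (hT : Continuous T)
    (hit : ∀ m x, ∃ j ≤ g m, T^[j] x ∈ U m)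
    (hqU : ∀ m x y, q m x = q m y → (x ∈ U m ↔ y ∈ U m))
    (hq : ∀ m, IsLocallyConstant (q m)) (m : ℕ) :
    IsLocallyConstant (itineraryCode T U q g m) := by
  rw [IsLocallyConstant.iff_eventually_eq]
  intro x
  cases m with
  | zero => exact Eventually.of_forall fun _ => rfl
  | succ m =>
    have hnear : ∀ᶠ y in 𝓝 x, ∀ i ∈ {i | i ≤ g m + ∑ k ∈ Finset.range m, g k},
        q m (T^[i] y) = q m (T^[i] x) :=
      (eventually_all_finite (finite_le_nat _)).2 fun i _ =>
        ((hq m).comp_continuous (hT.iterate i)).eventually_eq x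
    filter_upwards [hnear] with y hy using itineraryCode_succ_eq_of_forall hit hqU hy

end ItineraryCode

section ClopenPattern

variable {C : Type*} (U B : ℕ → Set C)

def clopenPattern (m : ℕ) (x : C) : Set ℕ × Set ℕ :=
  (Iic m ∩ {k | x ∈ U k}, Iic m ∩ {k | x ∈ B k})

variable {U B}

lemma clopenPattern_eq_of_succ_eq {m : ℕ} {x y : C}
    (h : clopenPattern U B (m + 1) x = clopenPattern U B (m + 1) y) :
    clopenPattern U B m x = clopenPattern U B m y := by
  have := congrArg (fun p : Set ℕ × Set ℕ => (Iic m ∩ p.1, Iic m ∩ p.2)) h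
  simpa only [clopenPattern, ← inter_assoc, Iic_inter_Iic, min_eq_left m.le_succ] using this

lemma mem_iff_of_clopenPattern_eq {m : ℕ} {x y : C}
    (h : clopenPattern U B m x = clopenPattern U B m y) : x ∈ U m ↔ y ∈ U m := by
  have := congrArg (m ∈ ·.1) h
  simpa [clopenPattern] using this

lemma clopenPattern_ne {m : ℕ} {x y : C} (hx : x ∈ B m) (hy : y ∉ B m) :
    clopenPattern U B m x ≠ clopenPattern U B m y := fun h => by
  have := congrArg (m ∈ ·.2) h
  simp [clopenPattern, hx, hy] at this

lemma IsClopen.eventually_mem_iff [TopologicalSpace C] {s : Set C} (hs : IsClopen s) (x : C) :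
    ∀ᶠ y in 𝓝 x, (y ∈ s ↔ x ∈ s) := by
  by_cases hx : x ∈ s
  · filter_upwards [hs.isOpen.mem_nhds hx] with y hy using iff_of_true hy hx
  · filter_upwards [hs.compl.isOpen.mem_nhds hx] with y hy using iff_of_false hy hx

lemma isLocallyConstant_clopenPattern [TopologicalSpace C] (hU : ∀ k, IsClopen (U k))
    (hB : ∀ k, IsClopen (B k)) (m : ℕ) : IsLocallyConstant (clopenPattern U B m) := by
  refine (IsLocallyConstant.iff_eventually_eq _).2 fun x => ?_
  have hnear : ∀ᶠ y in 𝓝 x, ∀ k ∈ {k | k ≤ m}, (y ∈ U k ↔ x ∈ U k) ∧ (y ∈ B k ↔ x ∈ B k) :=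
    (eventually_all_finite (finite_le_nat m)).2 fun k _ =>
      ((hU k).eventually_mem_iff x).and ((hB k).eventually_mem_iff x)
  filter_upwards [hnear] with y hy
  simp only [clopenPattern, Prod.mk.injEq, Set.ext_iff, mem_inter_iff, mem_Iic, mem_ofPred_eq]
  exact ⟨fun k => and_congr_right fun hk => (hy k hk).1,
    fun k => and_congr_right fun hk => (hy k hk).2⟩

end ClopenPattern

lemma exists_index_of_finite_range {α β : Type*} {f : α → β} (hf : (range f).Finite) :
    ∃ (a : α → ℕ) (N : ℕ), (∀ x, a x < N) ∧ ∀ x y, a x = a y ↔ f x = f y := by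
  have := hf.to_subtype
  let e := Finite.equivFin (range f)
  refine ⟨fun x => e ⟨f x, x, rfl⟩, Nat.card (range f), fun x => (e _).2, fun x y => ?_⟩
  rw [Fin.val_inj, e.apply_eq_iff_eq, Subtype.ext_iff]

section CodeWidth

variable {C : Type*} (T : C → C) (U : ℕ → Set C) (card g : ℕ → ℕ)

/-- Off `U m`, `T` divides level-`m+1` widths by this factor, which exceeds the ratio
`2 * card (m + 1)` of widths to gaps at that level. -/
def growth (m : ℕ) : ℝ := 2 * card m + 1

noncomputable def scale : ℕ → ℝ
  | 0 => 1
  | m + 1 => scale m / (2 * card m * growth card (m + 1) ^ g m)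

noncomputable def codeWidth : ℕ → C → ℝ
  | 0, _ => 1
  | m + 1, x => scale card g (m + 1) * growth card (m + 1) ^ hitTime T (U m) x

lemma one_le_growth (m : ℕ) : 1 ≤ growth card m := by
  unfold growth; linarith [(Nat.cast_nonneg (card m) : (0 : ℝ) ≤ card m)]

variable {T U card g}

lemma scale_pos (hcard : ∀ m, 0 < card m) (m : ℕ) : 0 < scale card g m := by
  induction m with
  | zero => exact one_pos
  | succ m ih =>
    have := one_le_growth card (m + 1)
    have : (0 : ℝ) < card m := by exact_mod_cast hcard m
    rw [scale]
    positivity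

lemma codeWidth_pos (hcard : ∀ m, 0 < card m) (m : ℕ) (x : C) : 0 < codeWidth T U card g m x := by
  cases m with
  | zero => exact one_pos
  | succ m =>
    have := one_le_growth card (m + 1)
    exact mul_pos (scale_pos hcard _) (by positivity)

lemma scale_le_codeWidth (hcard : ∀ m, 0 < card m) (m : ℕ) (x : C) :
    scale card g m ≤ codeWidth T U card g m x := by
  cases m with
  | zero => exact le_rfl
  | succ m =>
    exact le_mul_of_one_le_right (scale_pos hcard _).le (one_le_pow₀ (one_le_growth card _))

lemma codeWidth_succ_le (hcard : ∀ m, 0 < card m) {m : ℕ} {x : C}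
    (hx : hitTime T (U m) x ≤ g m) :
    codeWidth T U card g (m + 1) x ≤ codeWidth T U card g m x / (2 * card m) := by
  have hα := one_le_growth card (m + 1)
  have : (0 : ℝ) < card m := by exact_mod_cast hcard m
  calc codeWidth T U card g (m + 1) x
      ≤ scale card g (m + 1) * growth card (m + 1) ^ g m :=
        mul_le_mul_of_nonneg_left (pow_le_pow_right₀ hα hx) (scale_pos hcard _).le
    _ = scale card g m / (2 * card m) := by
        rw [scale]; field_simp
    _ ≤ codeWidth T U card g m x / (2 * card m) := by
        gcongr; exact scale_le_codeWidth hcard m x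

lemma codeWidth_succ_apply_lt (hcard : ∀ m, 0 < card m) {m : ℕ} {x : C} (hx : x ∉ U m)
    (hit : ∃ j, T^[j] x ∈ U m) :
    codeWidth T U card g (m + 1) (T x) < codeWidth T U card g (m + 1) x / (2 * card (m + 1)) := by
  have hw : codeWidth T U card g (m + 1) x =
      codeWidth T U card g (m + 1) (T x) * growth card (m + 1) := by
    rw [codeWidth, codeWidth, ← hitTime_apply_add_one hx hit, pow_succ, mul_assoc]
  have := codeWidth_pos (T := T) (U := U) (g := g) hcard (m + 1) (T x)
  have : (0 : ℝ) < card (m + 1) := by exact_mod_cast hcard (m + 1)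
  rw [hw, growth, lt_div_iff₀ (by positivity)]
  nlinarith

end CodeWidth

theorem exists_intervalScheme {C Q : Type*} [TopologicalSpace C] [CompactSpace C] [Nonempty C]
    {T : C → C} (hT : Continuous T) {U : ℕ → Set C} {g : ℕ → ℕ}
    (hit : ∀ m x, ∃ j ≤ g m, T^[j] x ∈ U m) {q : ℕ → C → Q}
    (hq : ∀ m, IsLocallyConstant (q m)) (hqU : ∀ m x y, q m x = q m y → (x ∈ U m ↔ y ∈ U m))
    (hq_succ : ∀ m x y, q (m + 1) x = q (m + 1) y → q m x = q m y)
    (hq_sep : ∀ x y, x ≠ y → ∃ m, q m x ≠ q m y) :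
    ∃ S : IntervalScheme C, (∀ m, IsLocallyConstant (S.digit m)) ∧
      (∀ x y, x ≠ y → ∃ m, S.digit m x ≠ S.digit m y) ∧
      ∀ m x y, x ∉ U m → (∀ k < m + 1, S.digit k x = S.digit k y) →
        |S.point (T x) - S.point (T y)| < S.gap (m + 1) x := by
  set code := itineraryCode T U q g
  have hcode := isLocallyConstant_itineraryCode hT hit hqU hq (g := g)
  choose digit card hlt hdigit using
    fun m => exists_index_of_finite_range (hcode (m + 1)).range_finite
  have hcard : ∀ m, 0 < card m := fun m => (Nat.zero_le _).trans_lt (hlt m (Classical.arbitrary C))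
  have hcell : ∀ m x y, (∀ k < m, digit k x = digit k y) ↔ code m x = code m y := by
    refine fun m x y => ⟨fun h => ?_, fun h k hk => (hdigit k x y).2
      (itineraryCode_eq_of_le hit hqU hq_succ hk h)⟩
    cases m with
    | zero => rfl
    | succ m => exact (hdigit m x y).1 (h m m.lt_succ_self)
  let S : IntervalScheme C :=
    { digit, card, width := codeWidth T U card g, digit_lt_card := hlt
      width_pos := codeWidth_pos hcard
      width_succ_le := fun m x => codeWidth_succ_le hcard <|
        let ⟨_, hj, hjx⟩ := hit m x; (hitTime_le hjx).trans hj
      width_congr := fun m x y h => by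
        cases m with
        | zero => rfl
        | succ m =>
          rw [codeWidth, codeWidth, hitTime_eq_of_itineraryCode_eq ((hcell (m + 1) x y).1 h)] }
  refine ⟨S, fun m => ?_, fun x y hxy => ?_, fun m x y hx hxy => ?_⟩
  · refine (IsLocallyConstant.iff_eventually_eq _).2 fun x => ?_
    filter_upwards [(hcode (m + 1)).eventually_eq x] with y hy using (hdigit m y x).2 hy
  · obtain ⟨m, hm⟩ := hq_sep x y hxy
    exact ⟨m, fun h => itineraryCode_succ_ne hm ((hdigit m x y).1 h)⟩
  · have hTxy := itineraryCode_succ_apply_eq hit hx ((hcell (m + 1) x y).1 hxy)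
    calc |S.point (T x) - S.point (T y)| ≤ codeWidth T U card g (m + 1) (T x) :=
          S.abs_point_sub_le ((hcell _ _ _).2 hTxy)
      _ < S.gap (m + 1) x := codeWidth_succ_apply_lt hcard hx ((hit m x).imp fun _ hj => hj.2)

lemma exists_forall_ge_notMem_of_pairwise_disjoint {C : Type*} {U : ℕ → Set C}
    (hU : Pairwise (Disjoint on U)) (x : C) : ∃ M, ∀ m ≥ M, x ∉ U m := by
  by_cases h : ∃ k, x ∈ U k
  · obtain ⟨k, hk⟩ := h
    exact ⟨k + 1, fun m hm hx => Set.disjoint_left.1 (hU (by omega : m ≠ k)) hx hk⟩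
  · exact ⟨0, fun m _ hx => h ⟨m, hx⟩⟩

section MinimalSystem

variable {C : Type*} [TopologicalSpace C] [CompactSpace C] {T : C → C}

lemma exists_uniform_hitting_bound (hT : Continuous T)
    (hmin : ∀ x : C, Dense (range fun n : ℕ => T^[n] x)) {U : Set C} (hU : IsOpen U)
    (hUne : U.Nonempty) : ∃ G, ∀ x, ∃ j ≤ G, T^[j] x ∈ U := by
  have hcover : univ ⊆ ⋃ j : ℕ, T^[j] ⁻¹' U := fun x _ =>
    let ⟨_, ⟨j, hj⟩, hjU⟩ := (hmin x).exists_mem_open hU hUne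
    mem_iUnion.2 ⟨j, by simpa [hj] using hjU⟩
  obtain ⟨t, ht⟩ :=
    isCompact_univ.elim_finite_subcover _ (fun j => hU.preimage (hT.iterate j)) hcover
  refine ⟨t.sup id, fun x => ?_⟩
  obtain ⟨j, hj, hjx⟩ := mem_iUnion₂.1 (ht (mem_univ x))
  exact ⟨j, Finset.le_sup (f := id) hj, hjx⟩

lemma surjective_of_dense_orbits [T2Space C] [Nonempty C] (hT : Continuous T)
    (hmin : ∀ x : C, Dense (range fun n : ℕ => T^[n] x)) : Surjective T := by
  obtain ⟨x⟩ := ‹Nonempty C›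
  have hdense : Dense (range T) :=
    (hmin (T x)).mono <| range_subset_iff.2 fun n => ⟨T^[n] x, (iterate_succ_apply' T n x).symm⟩
  exact range_eq_univ.1 ((isCompact_range hT).isClosed.closure_eq ▸ hdense.closure_eq)

end MinimalSystem

section CantorSpace

variable {C : Type*} [MetricSpace C] [CompactSpace C] [TotallyDisconnectedSpace C] [Nonempty C]

lemma exists_pairwise_disjoint_isClopen (hperf : Perfect (univ : Set C)) :
    ∃ U : ℕ → Set C, (∀ m, IsClopen (U m)) ∧ (∀ m, (U m).Nonempty) ∧ Pairwise (Disjoint on U) := by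
  obtain ⟨f, -, -, hf⟩ := hperf.exists_nat_bool_injection univ_nonempty
  have : Infinite C := Infinite.of_injective f hf
  obtain ⟨V, hVinf, hVopen, hVdisj⟩ := exists_seq_infinite_isOpen_pairwise_disjoint C
  choose x hx using fun m => (hVinf m).nonempty
  choose U hU hxU hUV using fun m => compact_exists_isClopen_in_isOpen (hVopen m) (hx m)
  exact ⟨U, hU, fun m => ⟨x m, hxU m⟩, hVdisj.mono fun i j h => h.mono (hUV i) (hUV j)⟩

lemma exists_isClopen_separating :
    ∃ B : ℕ → Set C, (∀ k, IsClopen (B k)) ∧ ∀ x y, x ≠ y → ∃ k, x ∈ B k ∧ y ∉ B k := by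
  obtain ⟨s, hs, hsc, hsb⟩ := isTopologicalBasis_isClopen.exists_countable (α := C)
  obtain ⟨x⟩ := ‹Nonempty C›
  obtain ⟨b, hb, -⟩ := hsb.exists_subset_of_mem_open (mem_univ x) isOpen_univ
  obtain ⟨B, rfl⟩ := hsc.exists_eq_range ⟨b, hb⟩
  refine ⟨B, fun k => hs ⟨k, rfl⟩, fun x y hxy => ?_⟩
  obtain ⟨_, ⟨k, rfl⟩, hxk, hk⟩ :=
    hsb.exists_subset_of_mem_open (mem_compl_singleton_iff.2 hxy) isOpen_compl_singleton
  exact ⟨k, hxk, fun hy => hk hy rfl⟩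

end CantorSpace

lemma exists_lrs_conjugate {C : Type*} [TopologicalSpace C] [CompactSpace C] [Nonempty C]
    {T : C → C} (hT : Continuous T) (hTs : Surjective T) {π : C → ℝ} (hπ : Continuous π)
    (hπi : Injective π)
    (hlrs : ∀ x, ∃ ε > 0, ∀ y, π y ≠ π x → |π x - π y| < ε → |π (T x) - π (T y)| < |π x - π y|) :
    ∃ X : Set ℝ, IsCompact X ∧
      ∃ f : ℝ → ℝ, ContinuousOn f X ∧ Set.MapsTo f X X ∧ Set.SurjOn f X X ∧
        (∀ x ∈ X, ∃ ε > 0, ∀ y ∈ X, y ≠ x → |x - y| < ε → |f x - f y| < |x - y|) ∧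
        ∃ π : C → ℝ, Continuous π ∧ Function.Injective π ∧ Set.range π = X ∧
          ∀ c : C, π (T c) = f (π c) := by
  set f := fun t => π (T (invFun π t))
  have hf : ∀ c, π (T c) = f (π c) := fun c => by simp [f, leftInverse_invFun hπi c]
  have hinv : ContinuousOn (invFun π) (range π) :=
    (hπ.isClosedEmbedding hπi).isInducing.continuousOn_iff.2 <|
      continuousOn_id.congr fun _ ⟨c, hc⟩ => hc ▸ invFun_eq ⟨c, rfl⟩
  refine ⟨range π, isCompact_range hπ, f, (hπ.comp hT).comp_continuousOn hinv, ?_, ?_, ?_,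
    π, hπ, hπi, rfl, hf⟩
  · rintro _ ⟨c, rfl⟩
    exact ⟨T c, hf c⟩
  · rintro _ ⟨c, rfl⟩
    obtain ⟨b, rfl⟩ := hTs c
    exact ⟨π b, mem_range_self b, (hf b).symm⟩
  · rintro _ ⟨x, rfl⟩
    obtain ⟨ε, hε, h⟩ := hlrs x
    refine ⟨ε, hε, ?_⟩
    rintro _ ⟨y, rfl⟩ hne hlt
    rw [← hf, ← hf]
    exact h y hne hlt

/-- Every minimal Cantor system `(C, T)` is topologically conjugate to a locally
radially shrinking system on a compact subset of `ℝ`: there are a compact set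
`X ⊆ ℝ`, a map `f` which is a continuous surjection of `X` onto itself and satisfies
the l.r.s. condition on `X`, and a homeomorphism `π` from `C` onto `X` with
`π ∘ T = f ∘ π`. -/
theorem minimal_Cantor_conjugate_to_lrs_on_real_compact
    {C : Type*} [MetricSpace C] [CompactSpace C] [Nonempty C]
    [TotallyDisconnectedSpace C] (hperf : Perfect (Set.univ : Set C))
    (T : C → C) (hT : Continuous T)
    (hmin : ∀ x : C, Dense (Set.range fun n : ℕ => T^[n] x)) :
    ∃ X : Set ℝ, IsCompact X ∧
      ∃ f : ℝ → ℝ, ContinuousOn f X ∧ Set.MapsTo f X X ∧ Set.SurjOn f X X ∧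
        (∀ x ∈ X, ∃ ε > 0, ∀ y ∈ X, y ≠ x → |x - y| < ε → |f x - f y| < |x - y|) ∧
        ∃ π : C → ℝ, Continuous π ∧ Function.Injective π ∧ Set.range π = X ∧
          ∀ c : C, π (T c) = f (π c) := by
  obtain ⟨U, hU, hUne, hUdisj⟩ := exists_pairwise_disjoint_isClopen hperf
  obtain ⟨B, hB, hBsep⟩ := exists_isClopen_separating (C := C)
  choose g hg using fun m => exists_uniform_hitting_bound hT hmin (hU m).isOpen (hUne m)
  obtain ⟨S, hloc, hsep, hcontract⟩ := exists_intervalScheme hT hg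
    (isLocallyConstant_clopenPattern hU hB) (fun _ _ _ => mem_iff_of_clopenPattern_eq)
    (fun _ _ _ => clopenPattern_eq_of_succ_eq)
    (fun x y hxy => let ⟨k, hxk, hyk⟩ := hBsep x y hxy; ⟨k, clopenPattern_ne hxk hyk⟩)
  refine exists_lrs_conjugate hT (surjective_of_dense_orbits hT hmin) (S.continuous_point hloc)
    (S.point_injective hsep) fun x => S.exists_lrs_radius T hsep ?_
  obtain ⟨M, hM⟩ := exists_forall_ge_notMem_of_pairwise_disjoint hUdisj x
  refine ⟨M + 1, fun m hm y hxy => ?_⟩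
  obtain ⟨m, rfl⟩ := Nat.exists_eq_add_of_le' (le_of_add_le_right hm)
  exact hcontract m x y (hM m (by omega)) hxy
end

section
/- Let (Vᵢ, Eᵢ), i ≥ 0, be a sequence of finite graphs (Vᵢ a nonempty finite set, Eᵢ ⊆ Vᵢ × Vᵢ) each of which is edge surjective, and let φᵢ : V_{i+1} → Vᵢ be bd-covers, i.e., edge-preserving ((u,v) ∈ E_{i+1} implies (φᵢ(u), φᵢ(v)) ∈ Eᵢ) and bidirectional. Let V_𝒢 = {x ∈ ∏ᵢ Vᵢ : φᵢ(x_{i+1}) = xᵢ for all i ≥ 0} carry the subspace topology of the product of the discrete spaces Vᵢ, and let E_𝒢 = {(x,y) ∈ V_𝒢 × V_𝒢 : (xᵢ, yᵢ) ∈ Eᵢ for all i ≥ 0}. Then V_𝒢 is a compact, metrizable, zero-dimensional (totally disconnected) space, and the relation E_𝒢 is the graph of a homeomorphism of V_𝒢; that is, there exists a homeomorphism h : V_𝒢 → V_𝒢 such that (x,y) ∈ E_𝒢 if and only if y = h(x). -/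
/-!
A point of the inverse limit determines its successor level by level: if `u ∈ V_{i+1}` and
`u → w`, bidirectionality makes `φᵢ w` independent of the choice of `w`, so
`(f x)ᵢ := φᵢ w` for any edge `x_{i+1} → w` is well defined, lies in the inverse limit, is the
only out-neighbour of `x`, and depends only on the coordinate `x_{i+1}`, hence continuously on
`x`. Applied to the reversed graph, the same construction gives the predecessor map, which is
inverse to `f`.
-/

abbrev InverseLimit (V : ℕ → Type*) (φ : ∀ i, V (i + 1) → V i) :=
  {x : ∀ i, V i // ∀ i, φ i (x (i + 1)) = x i}

section Topology

variable {V : ℕ → Type*} [∀ i, TopologicalSpace (V i)] {φ : ∀ i, V (i + 1) → V i}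

theorem isClosed_setOf_inverseLimit [∀ i, T2Space (V i)] (hφ : ∀ i, Continuous (φ i)) :
    IsClosed {x : ∀ i, V i | ∀ i, φ i (x (i + 1)) = x i} := by
  simp only [Set.ofPred_forall]
  exact isClosed_iInter fun i =>
    isClosed_eq ((hφ i).comp (continuous_apply (i + 1))) (continuous_apply i)

theorem InverseLimit.compactSpace [∀ i, T2Space (V i)] [∀ i, CompactSpace (V i)]
    (hφ : ∀ i, Continuous (φ i)) : CompactSpace (InverseLimit V φ) :=
  isCompact_iff_compactSpace.mp (isClosed_setOf_inverseLimit hφ).isCompact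

end Topology

section Successor

variable {V : ℕ → Type*} {E : ∀ i, Set (V i × V i)} {φ : ∀ i, V (i + 1) → V i}

variable (E φ) in
noncomputable def succLevel (hout : ∀ i (u : V (i + 1)), ∃ w, (u, w) ∈ E (i + 1)) (i : ℕ)
    (u : V (i + 1)) : V i :=
  φ i (hout i u).choose

theorem succLevel_eq {hout : ∀ i (u : V (i + 1)), ∃ w, (u, w) ∈ E (i + 1)}
    (hbd_out : ∀ i, ∀ u v v' : V (i + 1), (u, v) ∈ E (i + 1) → (u, v') ∈ E (i + 1) → φ i v = φ i v')
    {i : ℕ} {u w : V (i + 1)} (h : (u, w) ∈ E (i + 1)) : succLevel E φ hout i u = φ i w :=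
  hbd_out i u _ w (hout i u).choose_spec h

theorem edge_succLevel {hout : ∀ i (u : V (i + 1)), ∃ w, (u, w) ∈ E (i + 1)}
    (hhom : ∀ i, ∀ u v : V (i + 1), (u, v) ∈ E (i + 1) → (φ i u, φ i v) ∈ E i)
    (i : ℕ) (u : V (i + 1)) : (φ i u, succLevel E φ hout i u) ∈ E i :=
  hhom i _ _ (hout i u).choose_spec

variable (hout : ∀ i (u : V (i + 1)), ∃ w, (u, w) ∈ E (i + 1))
  (hhom : ∀ i, ∀ u v : V (i + 1), (u, v) ∈ E (i + 1) → (φ i u, φ i v) ∈ E i)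
  (hbd_out : ∀ i, ∀ u v v' : V (i + 1), (u, v) ∈ E (i + 1) → (u, v') ∈ E (i + 1) → φ i v = φ i v')

noncomputable def InverseLimit.succ (x : InverseLimit V φ) : InverseLimit V φ :=
  ⟨fun i => succLevel E φ hout i (x.1 (i + 1)), fun i => by
    have hedge := edge_succLevel (hout := hout) hhom (i + 1) (x.1 (i + 2))
    rw [x.2 (i + 1)] at hedge
    exact (succLevel_eq hbd_out hedge).symm⟩

theorem InverseLimit.edge_iff_eq_succ (x y : InverseLimit V φ) :
    (∀ i, (x.1 i, y.1 i) ∈ E i) ↔ y = InverseLimit.succ hout hhom hbd_out x := by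
  constructor
  · intro hxy
    ext i
    exact ((succLevel_eq hbd_out (hxy (i + 1))).trans (y.2 i)).symm
  · rintro rfl i
    have hedge := edge_succLevel (hout := hout) hhom i (x.1 (i + 1))
    rwa [x.2 i] at hedge

theorem InverseLimit.continuous_succ [∀ i, TopologicalSpace (V i)] [∀ i, DiscreteTopology (V i)] :
    Continuous (InverseLimit.succ hout hhom hbd_out) :=
  Continuous.subtype_mk (continuous_pi fun i =>
    (continuous_of_discreteTopology (f := succLevel E φ hout i)).comp
      ((continuous_apply (i + 1)).comp continuous_subtype_val)) _

end Successor

theorem inverse_limit_of_bd_covers_is_homeomorphism_general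
    (V : ℕ → Type) [∀ i, Fintype (V i)]
    [∀ i, TopologicalSpace (V i)] [∀ i, DiscreteTopology (V i)]
    (E : ∀ i, Set (V i × V i))
    (hedgesurj : ∀ i, ∀ v : V i,
      (∃ u : V i, (u, v) ∈ E i) ∧ (∃ w : V i, (v, w) ∈ E i))
    (φ : ∀ i, V (i + 1) → V i)
    (hhom : ∀ i, ∀ u v : V (i + 1), (u, v) ∈ E (i + 1) → (φ i u, φ i v) ∈ E i)
    (hbd_out : ∀ i, ∀ u v v' : V (i + 1),
      (u, v) ∈ E (i + 1) → (u, v') ∈ E (i + 1) → φ i v = φ i v')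
    (hbd_in : ∀ i, ∀ w w' u : V (i + 1),
      (w, u) ∈ E (i + 1) → (w', u) ∈ E (i + 1) → φ i w = φ i w') :
    CompactSpace {x : ∀ i, V i // ∀ i, φ i (x (i + 1)) = x i} ∧
    TopologicalSpace.MetrizableSpace {x : ∀ i, V i // ∀ i, φ i (x (i + 1)) = x i} ∧
    TotallyDisconnectedSpace {x : ∀ i, V i // ∀ i, φ i (x (i + 1)) = x i} ∧
    ∃ h : {x : ∀ i, V i // ∀ i, φ i (x (i + 1)) = x i} ≃ₜ
          {x : ∀ i, V i // ∀ i, φ i (x (i + 1)) = x i},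
      ∀ x y : {x : ∀ i, V i // ∀ i, φ i (x (i + 1)) = x i},
        (∀ i, (x.1 i, y.1 i) ∈ E i) ↔ y = h x := by
  refine ⟨InverseLimit.compactSpace fun _ => continuous_of_discreteTopology,
    Topology.IsEmbedding.subtypeVal.metrizableSpace, inferInstance, ?_⟩
  have hout : ∀ i (u : V (i + 1)), ∃ w, (u, w) ∈ E (i + 1) := fun i u => (hedgesurj (i + 1) u).2
  have hin : ∀ i (u : V (i + 1)), ∃ w, (u, w) ∈ Prod.swap ⁻¹' E (i + 1) :=
    fun i u => (hedgesurj (i + 1) u).1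
  have hhom_rev : ∀ i, ∀ u v : V (i + 1),
      (u, v) ∈ Prod.swap ⁻¹' E (i + 1) → (φ i u, φ i v) ∈ Prod.swap ⁻¹' E i :=
    fun i u v h => hhom i v u h
  have hbd_rev : ∀ i, ∀ u v v' : V (i + 1),
      (u, v) ∈ Prod.swap ⁻¹' E (i + 1) → (u, v') ∈ Prod.swap ⁻¹' E (i + 1) → φ i v = φ i v' :=
    fun i u v v' => hbd_in i v v' u
  have hsucc := InverseLimit.edge_iff_eq_succ hout hhom hbd_out
  have hpred := InverseLimit.edge_iff_eq_succ (E := fun i => Prod.swap ⁻¹' E i) hin hhom_rev hbd_rev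
  refine ⟨{ toFun := InverseLimit.succ hout hhom hbd_out
            invFun := InverseLimit.succ hin hhom_rev hbd_rev
            left_inv := fun x => ((hpred _ x).1 ((hsucc x _).2 rfl)).symm
            right_inv := fun y => ((hsucc _ y).1 ((hpred y _).2 rfl)).symm
            continuous_toFun := InverseLimit.continuous_succ hout hhom hbd_out
            continuous_invFun := InverseLimit.continuous_succ hin hhom_rev hbd_rev }, hsucc⟩

/-- **Inverse limits of bd-covers.**
Let `(Vᵢ, Eᵢ)` be a sequence of edge-surjective finite graphs and `φᵢ : V_{i+1} → Vᵢ`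
bidirectional graph homomorphisms (bd-covers).  Then the inverse limit
`V_𝒢 = {x ∈ Π Vᵢ : φᵢ(x_{i+1}) = xᵢ}` (with the product of the discrete topologies)
is a compact, metrizable, totally disconnected (zero-dimensional) space, and the
edge relation `E_𝒢 = {(x, y) : (xᵢ, yᵢ) ∈ Eᵢ for all i}` is the graph of a
homeomorphism of `V_𝒢`. -/
theorem inverse_limit_of_bd_covers_is_homeomorphism
    (V : ℕ → Type) [∀ i, Fintype (V i)] [∀ i, Nonempty (V i)]
    [∀ i, TopologicalSpace (V i)] [∀ i, DiscreteTopology (V i)]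
    (E : ∀ i, Set (V i × V i))
    (hedgesurj : ∀ i, ∀ v : V i,
      (∃ u : V i, (u, v) ∈ E i) ∧ (∃ w : V i, (v, w) ∈ E i))
    (φ : ∀ i, V (i + 1) → V i)
    (hhom : ∀ i, ∀ u v : V (i + 1), (u, v) ∈ E (i + 1) → (φ i u, φ i v) ∈ E i)
    (hbd_out : ∀ i, ∀ u v v' : V (i + 1),
      (u, v) ∈ E (i + 1) → (u, v') ∈ E (i + 1) → φ i v = φ i v')
    (hbd_in : ∀ i, ∀ w w' u : V (i + 1),
      (w, u) ∈ E (i + 1) → (w', u) ∈ E (i + 1) → φ i w = φ i w') :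
    CompactSpace {x : ∀ i, V i // ∀ i, φ i (x (i + 1)) = x i} ∧
    TopologicalSpace.MetrizableSpace {x : ∀ i, V i // ∀ i, φ i (x (i + 1)) = x i} ∧
    TotallyDisconnectedSpace {x : ∀ i, V i // ∀ i, φ i (x (i + 1)) = x i} ∧
    ∃ h : {x : ∀ i, V i // ∀ i, φ i (x (i + 1)) = x i} ≃ₜ
          {x : ∀ i, V i // ∀ i, φ i (x (i + 1)) = x i},
      ∀ x y : {x : ∀ i, V i // ∀ i, φ i (x (i + 1)) = x i},
        (∀ i, (x.1 i, y.1 i) ∈ E i) ↔ y = h x :=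
  inverse_limit_of_bd_covers_is_homeomorphism_general V E hedgesurj φ hhom hbd_out hbd_in
end
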